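/- arXiv:2011.08773 — 3 statements merged into one kernel-verified Lean document; each statement's English description precedes it below -/
import Mathlib

section
/- Let Γ = ⟨x_0, ..., x_{n+1} | R⟩ with R = x_0^q(x_0,x_1)⋯(x_n,x_{n+1}) and p | q. Define 1-cocycles c_0, c_1 : Γ → F_p (group homomorphisms to the additive group F_p, since the action is trivial) by c_i(x_j) = δ_{ij} for i = 0,1. Then the cup product [c_0] ∪ [c_1] ∈ H²(Γ, F_p) is nonzero; equivalently, there exists no function f: Γ → F_p making g ↦ (1, c_0(g), f(g); 0, 1, c_1(g); 0, 0, 1) a group homomorphism from Γ to the group of 3×3 upper unitriangular matrices over F_p. -/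
/-!
A lift `f` pulled back to the free group must vanish on the relator `R`. But `f` is the corner
entry of a homomorphism into the Heisenberg group: since `c₁(x₀) = 0` and `p ∣ q`, it vanishes
on `x₀^q`; the commutators have `c₀ = 0`, so `f` is additive on their product; and `f` sends
`(x_{2k}, x_{2k+1})` to `c₀(x_{2k}) c₁(x_{2k+1}) - c₀(x_{2k+1}) c₁(x_{2k}) = δ_{k0}`.
So `f(R) = 1`.
-/

section AdditiveMap

variable {G A : Type*} [Group G] [AddGroup A] {φ : G → A}

lemma additive_map_one (hφ : ∀ g h, φ (g * h) = φ g + φ h) : φ 1 = 0 := by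
  simpa using hφ 1 1

lemma additive_map_inv (hφ : ∀ g h, φ (g * h) = φ g + φ h) (g : G) : φ g⁻¹ = -φ g := by
  rw [eq_neg_iff_add_eq_zero, ← hφ, inv_mul_cancel, additive_map_one hφ]

lemma additive_map_pow (hφ : ∀ g h, φ (g * h) = φ g + φ h) (g : G) (n : ℕ) :
    φ (g ^ n) = n • φ g := by
  induction n with
  | zero => simpa using additive_map_one hφ
  | succ n ih => rw [pow_succ, hφ, ih, succ_nsmul]

end AdditiveMap

/-- `g ↦ (1, a g, f g; 0, 1, b g; 0, 0, 1)` is a homomorphism into the unitriangular group,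
i.e. `a`, `b` are 1-cocycles with trivial coefficients and `a ∪ b = -δf`. -/
structure IsHeisenbergHom {G A : Type*} [Group G] [CommRing A] (a b f : G → A) : Prop where
  left_mul : ∀ g h, a (g * h) = a g + a h
  right_mul : ∀ g h, b (g * h) = b g + b h
  map_mul : ∀ g h, f (g * h) = f g + f h + a g * b h

namespace IsHeisenbergHom

variable {G A : Type*} [Group G] [CommRing A] {a b f : G → A}

lemma of_matrix (ha : ∀ g h, a (g * h) = a g + a h) (hb : ∀ g h, b (g * h) = b g + b h)
    (hf : ∀ g h, (!![1, a (g * h), f (g * h); 0, 1, b (g * h); 0, 0, 1] :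
        Matrix (Fin 3) (Fin 3) A) =
        !![1, a g, f g; 0, 1, b g; 0, 0, 1] * !![1, a h, f h; 0, 1, b h; 0, 0, 1]) :
    IsHeisenbergHom a b f where
  left_mul := ha
  right_mul := hb
  map_mul g h := by
    have h02 := congrFun (congrFun (hf g h) 0) 2
    simp only [Matrix.mul_fin_three, Matrix.of_apply, Matrix.cons_val', Matrix.cons_val,
      Matrix.cons_val_fin_one, Matrix.cons_val_zero, mul_one, mul_zero, add_zero, one_mul,
      zero_mul, zero_add] at h02
    linear_combination h02

lemma map_one (H : IsHeisenbergHom a b f) : f 1 = 0 := by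
  simpa [additive_map_one H.left_mul] using H.map_mul 1 1

lemma map_inv (H : IsHeisenbergHom a b f) (g : G) : f g⁻¹ = -f g + a g * b g := by
  have := H.map_mul g⁻¹ g
  rw [inv_mul_cancel, H.map_one, additive_map_inv H.left_mul] at this
  linear_combination -this

lemma map_commutator (H : IsHeisenbergHom a b f) (g h : G) :
    f (g⁻¹ * h⁻¹ * g * h) = a g * b h - a h * b g := by
  simp only [H.map_mul, H.left_mul, H.map_inv, additive_map_inv H.left_mul,
    additive_map_inv H.right_mul]
  ring

lemma left_commutator (H : IsHeisenbergHom a b f) (g h : G) : a (g⁻¹ * h⁻¹ * g * h) = 0 := by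
  simp only [H.left_mul, additive_map_inv H.left_mul]
  abel

lemma map_mul_of_left_eq_zero (H : IsHeisenbergHom a b f) {g : G} (hg : a g = 0) (h : G) :
    f (g * h) = f g + f h := by
  rw [H.map_mul, hg, zero_mul, add_zero]

lemma map_pow_of_right_eq_zero (H : IsHeisenbergHom a b f) {g : G} (hg : b g = 0) (n : ℕ) :
    f (g ^ n) = n * f g := by
  induction n with
  | zero => simpa using H.map_one
  | succ n ih => rw [pow_succ, H.map_mul, ih, hg, mul_zero, add_zero, Nat.cast_succ, add_one_mul]

lemma map_list_prod_of_left_eq_zero (H : IsHeisenbergHom a b f) :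
    ∀ l : List G, (∀ g ∈ l, a g = 0) → f l.prod = (l.map f).sum
  | [], _ => by simpa using H.map_one
  | g :: l, hl => by
    rw [List.prod_cons, H.map_mul_of_left_eq_zero (hl g (by simp)),
      H.map_list_prod_of_left_eq_zero l (fun x hx ↦ hl x (by simp [hx])), List.map_cons,
      List.sum_cons]

end IsHeisenbergHom

theorem stmt7_general (p m q : ℕ) [Fact p.Prime] (hpq : p ∣ q)
    (R : FreeGroup ℕ)
    (hR : R = (FreeGroup.of 0) ^ q *
      (((List.range (m + 1)).map fun k =>
        (FreeGroup.of (2 * k))⁻¹ * (FreeGroup.of (2 * k + 1))⁻¹ *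
          FreeGroup.of (2 * k) * FreeGroup.of (2 * k + 1))).prod)
    (c0 c1 : PresentedGroup ({R} : Set (FreeGroup ℕ)) → ZMod p)
    (hc0add : ∀ g h, c0 (g * h) = c0 g + c0 h)
    (hc1add : ∀ g h, c1 (g * h) = c1 g + c1 h)
    (hc0gen : ∀ j : ℕ, c0 (PresentedGroup.of j) = if j = 0 then 1 else 0)
    (hc1gen : ∀ j : ℕ, c1 (PresentedGroup.of j) = if j = 1 then 1 else 0) :
    ¬ ∃ f : PresentedGroup ({R} : Set (FreeGroup ℕ)) → ZMod p,
      ∀ g h,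
        (!![1, c0 (g * h), f (g * h); 0, 1, c1 (g * h); 0, 0, 1] :
            Matrix (Fin 3) (Fin 3) (ZMod p))
          = !![1, c0 g, f g; 0, 1, c1 g; 0, 0, 1] *
            !![1, c0 h, f h; 0, 1, c1 h; 0, 0, 1] := by
  rintro ⟨f, hf⟩
  have H := IsHeisenbergHom.of_matrix hc0add hc1add hf
  set x : ℕ → PresentedGroup ({R} : Set (FreeGroup ℕ)) := PresentedGroup.of
  have hRx : PresentedGroup.mk _ R = x 0 ^ q * ((List.range (m + 1)).map fun k =>
      (x (2 * k))⁻¹ * (x (2 * k + 1))⁻¹ * x (2 * k) * x (2 * k + 1)).prod := by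
    refine (congrArg _ hR).trans ?_
    rw [map_mul, map_pow, map_list_prod, List.map_map]
    rfl
  have hq : (q : ZMod p) = 0 := (ZMod.natCast_eq_zero_iff q p).mpr hpq
  have hc0q : c0 (x 0 ^ q) = 0 := by rw [additive_map_pow hc0add, nsmul_eq_mul, hq, zero_mul]
  have hfR : f (PresentedGroup.mk _ R) = 1 := by
    have hx0 : c1 (x 0) = 0 := by simp [x, hc1gen]
    rw [hRx, H.map_mul_of_left_eq_zero hc0q, H.map_pow_of_right_eq_zero hx0, hq, zero_mul,
      zero_add, H.map_list_prod_of_left_eq_zero _ (by simp [H.left_commutator]), List.map_map,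
      List.sum_range_succ']
    simp [H.map_commutator, x, hc0gen, hc1gen]
  rw [PresentedGroup.one_of_mem (Set.mem_singleton R), H.map_one] at hfR
  exact zero_ne_one hfR

/-- For the Demuškin-type one-relator group `Γ = ⟨x₀,…,x_{n+1} ∣ R⟩` with
`R = x₀^q (x₀,x₁)⋯(x_n,x_{n+1})`, `n = 2m`, and `p ∣ q`, the 1-cocycles
`c₀, c₁ : Γ → 𝔽_p` (homomorphisms, the action being trivial) determined by
`cᵢ(xⱼ) = δᵢⱼ` have nonzero cup product `[c₀] ∪ [c₁] ∈ H²(Γ, 𝔽_p)`: there is no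
function `f : Γ → 𝔽_p` making `g ↦ (1, c₀(g), f(g); 0, 1, c₁(g); 0, 0, 1)` a group
homomorphism into the upper unitriangular 3×3 matrices over `𝔽_p`. -/
theorem stmt7 (p m q : ℕ) [Fact p.Prime] (hpq : p ∣ q) (hq : 1 ≤ q)
    (R : FreeGroup ℕ)
    (hR : R = (FreeGroup.of 0) ^ q *
      (((List.range (m + 1)).map fun k =>
        (FreeGroup.of (2 * k))⁻¹ * (FreeGroup.of (2 * k + 1))⁻¹ *
          FreeGroup.of (2 * k) * FreeGroup.of (2 * k + 1))).prod)
    (c0 c1 : PresentedGroup ({R} : Set (FreeGroup ℕ)) → ZMod p)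
    (hc0add : ∀ g h, c0 (g * h) = c0 g + c0 h)
    (hc1add : ∀ g h, c1 (g * h) = c1 g + c1 h)
    (hc0gen : ∀ j : ℕ, c0 (PresentedGroup.of j) = if j = 0 then 1 else 0)
    (hc1gen : ∀ j : ℕ, c1 (PresentedGroup.of j) = if j = 1 then 1 else 0) :
    ¬ ∃ f : PresentedGroup ({R} : Set (FreeGroup ℕ)) → ZMod p,
      ∀ g h,
        (!![1, c0 (g * h), f (g * h); 0, 1, c1 (g * h); 0, 0, 1] :
            Matrix (Fin 3) (Fin 3) (ZMod p))
          = !![1, c0 g, f g; 0, 1, c1 g; 0, 0, 1] *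
            !![1, c0 h, f h; 0, 1, c1 h; 0, 0, 1] :=
  stmt7_general p m q hpq R hR c0 c1 hc0add hc1add hc0gen hc1gen
end

section
/- Let 0 → A → B → C → 0 be a central extension of groups with continuous action of a profinite group Γ (A central in B, all maps Γ-equivariant). Let H ⊴ Γ be an open normal subgroup with Δ = Γ/H finite of order prime to the order of every element of A (A a finite abelian p-group, p ∤ #Δ). Suppose the restriction maps H¹(Γ, A) → H¹(H, A)^Δ and H¹(Γ, C) → H¹(H, C)^Δ are bijections and H²(Γ, A) → H²(H, A) is injective. Then the restriction map of non-abelian cohomology pointed sets H¹(Γ, B) → H¹(H, B)^Δ is a bijection. -/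
/-!
Since `A` is central, twisting a `B`-cocycle `e` by an element `w` whose image in `C` is fixed
multiplies `e` by an `A`-cocycle (the connecting map). Fix `m` with
`[Γ : H] * m ≡ 1` on `A`.

Injectivity: two cocycles with cohomologous restrictions have cohomologous images in `C`, so
after twisting one of them they differ by an `A`-cocycle `a` whose restriction to `H` is the
connecting cocycle of an `H`-fixed element `x` of `C`. The norm of `x` over `Γ/H` is `Γ`-fixed,
and its connecting cocycle restricts to `a ^ [Γ : H]` up to a coboundary. Its `m`-th power
therefore agrees with `a` on `H`, hence on `Γ`, so `a` is itself a connecting cocycle.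

Surjectivity: extend the image of `c` in `C` to a `Γ`-cocycle, and lift that to a `B`-cocycle `b`
by killing its obstruction in `H²(Γ, A)`, which vanishes on `H` because `c` is a lift there. Then
`b = a₀ · c` on `H` for an `A`-cocycle `a₀`. By `Δ`-invariance of `c`, every `Δ`-conjugate of `a₀`
agrees with `a₀` up to a connecting cocycle of `c`, so the norm of `a₀` agrees with
`a₀ ^ [Γ : H]` up to one. The `m`-th power of the norm is `Δ`-invariant, hence extends to a
`Γ`-cocycle `e`, and `ι(e)⁻¹ · b` restricts to a twist of `c`.
-/

section Defs

variable {Γ B : Type*} [Group Γ] [Group B] [MulDistribMulAction Γ B]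

/-- A (possibly non-abelian) 1-cocycle of `Γ` valued in `B`. -/
def IsCocycle (c : Γ → B) : Prop := ∀ g h : Γ, c (g * h) = c g * g • c h

/-- Cohomologous 1-cocycles (twisted conjugation). -/
def Cohomologous (c c' : Γ → B) : Prop := ∃ b : B, ∀ g : Γ, c' g = b⁻¹ * c g * g • b

/-- A 1-cocycle of a subgroup `H ≤ Γ` valued in `B` (action restricted from `Γ`). -/
def IsCocycleOn (H : Subgroup Γ) (c : H → B) : Prop :=
  ∀ g h : H, c (g * h) = c g * (g : Γ) • c h

/-- Cohomologous 1-cocycles on a subgroup. -/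
def CohomologousOn (H : Subgroup Γ) (c c' : H → B) : Prop :=
  ∃ b : B, ∀ g : H, c' g = b⁻¹ * c g * (g : Γ) • b

/-- The class of a cocycle on a normal subgroup `H` is invariant under `Δ = Γ/H`. -/
def DeltaInvariant (H : Subgroup Γ) [H.Normal] (c : H → B) : Prop :=
  ∀ γ : Γ, CohomologousOn H
    (fun h : H => γ • c ⟨γ⁻¹ * (h : Γ) * γ, by
      simpa using (inferInstance : H.Normal).conj_mem (h : Γ) h.2 γ⁻¹⟩) c

/-- A 2-cocycle of `Γ` valued in a `Γ`-group `A` (written multiplicatively; used for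
abelian `A`). -/
def Is2Cocycle (f : Γ → Γ → B) : Prop :=
  ∀ g h j : Γ, g • f h j * f g (h * j) = f (g * h) j * f g h

/-- A 2-coboundary of `Γ` valued in `B`. -/
def Is2Coboundary (f : Γ → Γ → B) : Prop :=
  ∃ u : Γ → B, ∀ g h : Γ, f g h = u g * g • u h * (u (g * h))⁻¹

/-- A 2-coboundary of a subgroup `H ≤ Γ`. -/
def Is2CoboundaryOn (H : Subgroup Γ) (f : H → H → B) : Prop :=
  ∃ u : H → B, ∀ g h : H, f g h = u g * (g : Γ) • u h * (u (g * h))⁻¹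

end Defs

section Twist

variable {G B : Type*} [Group G] [Group B] [MulDistribMulAction G B]

def twist (c : G → B) (b : B) : G → B := fun g => b⁻¹ * c g * g • b

theorem twist_apply (c : G → B) (b : B) (g : G) : twist c b g = b⁻¹ * c g * g • b := rfl

@[simp]
theorem twist_one (c : G → B) : twist c 1 = c := by
  ext g; simp [twist_apply]

theorem twist_twist (c : G → B) (b₁ b₂ : B) : twist (twist c b₁) b₂ = twist c (b₁ * b₂) := by
  ext g; simp only [twist_apply, smul_mul']; group

theorem twist_twist_inv (c : G → B) (b : B) : twist (twist c b) b⁻¹ = c := by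
  rw [twist_twist, mul_inv_cancel, twist_one]

theorem cohomologous_iff {c c' : G → B} : Cohomologous c c' ↔ ∃ b, twist c b = c' := by
  simp only [Cohomologous, funext_iff, twist_apply, eq_comm]

theorem cohomologous_of_twist_eq {c c' : G → B} {b : B} (h : twist c b = c') :
    Cohomologous c' c :=
  cohomologous_iff.2 ⟨b⁻¹, by rw [← h, twist_twist_inv]⟩

theorem IsCocycle.twist {c : G → B} (hc : IsCocycle c) (b : B) : IsCocycle (twist c b) := by
  intro g h
  simp only [twist_apply, hc g h, mul_smul, smul_mul', smul_inv']
  group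

theorem IsCocycle.map {C : Type*} [Group C] [MulDistribMulAction G C] {c : G → B}
    (hc : IsCocycle c) (f : B →* C) (hf : ∀ (g : G) (b : B), f (g • b) = g • f b) :
    IsCocycle fun g => f (c g) := by
  intro g h
  simp only [hc g h, map_mul, hf]

theorem map_twist {C : Type*} [Group C] [MulDistribMulAction G C] (c : G → B) (b : B)
    (f : B →* C) (hf : ∀ (g : G) (b : B), f (g • b) = g • f b) :
    (fun g => f (twist c b g)) = twist (fun g => f (c g)) (f b) := by
  ext g; simp only [twist_apply, map_mul, map_inv, hf]

theorem IsCocycle.smul_apply_conj {c : G → B} (hc : IsCocycle c) (g h : G) :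
    g • c (g⁻¹ * h * g) = _root_.twist c (c g) h := by
  have key := hc g (g⁻¹ * h * g)
  rw [show g * (g⁻¹ * h * g) = h * g by group, hc h g] at key
  rw [twist_apply, eq_inv_mul_iff_mul_eq.2 key.symm, mul_assoc]

theorem IsCocycle.restrict {b : G → B} (hb : IsCocycle b) (H : Subgroup G) :
    IsCocycleOn H fun h : H => b h :=
  fun g h => hb g h

end Twist

section AbelianTwist

variable {G A : Type*} [Group G] [CommGroup A] [MulDistribMulAction G A]

theorem twist_mul_twist (c c' : G → A) (α α' : A) :
    twist c α * twist c' α' = twist (c * c') (α * α') := by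
  ext g; simp only [Pi.mul_apply, twist_apply, smul_mul', mul_inv]; ac_rfl

theorem twist_pow (c : G → A) (α : A) (n : ℕ) : twist c α ^ n = twist (c ^ n) (α ^ n) := by
  induction n with
  | zero => simp
  | succ n ih => rw [pow_succ, ih, twist_mul_twist, ← pow_succ, ← pow_succ]

theorem prod_twist {ι : Type*} (s : Finset ι) (c : ι → G → A) (α : ι → A) :
    ∏ i ∈ s, twist (c i) (α i) = twist (∏ i ∈ s, c i) (∏ i ∈ s, α i) := by
  classical
  induction s using Finset.induction_on with
  | empty => simp
  | insert i s hi ih => rw [Finset.prod_insert hi, ih, twist_mul_twist, ← Finset.prod_insert hi,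
      ← Finset.prod_insert hi]

theorem IsCocycle.mul {c c' : G → A} (hc : IsCocycle c) (hc' : IsCocycle c') :
    IsCocycle (c * c') := by
  intro g h
  simp only [Pi.mul_apply, hc g h, hc' g h, smul_mul']
  ac_rfl

theorem isCocycle_prod {ι : Type*} (s : Finset ι) {c : ι → G → A}
    (hc : ∀ i ∈ s, IsCocycle (c i)) : IsCocycle (∏ i ∈ s, c i) :=
  Finset.prod_induction _ _ (fun _ _ => IsCocycle.mul) (fun g h => by simp) hc

theorem IsCocycle.pow {a : G → A} (ha : IsCocycle a) (n : ℕ) : IsCocycle (a ^ n) := by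
  intro g h
  simp only [Pi.pow_apply, ha g h, mul_pow, smul_pow']

theorem IsCocycle.inv {a : G → A} (ha : IsCocycle a) : IsCocycle a⁻¹ := by
  intro g h
  simp only [Pi.inv_apply, ha g h, mul_inv, smul_inv']

end AbelianTwist

structure IsCentralExtension (G : Type*) {A B C : Type*} [Group G] [CommGroup A] [Group B]
    [CommGroup C] [MulDistribMulAction G A] [MulDistribMulAction G B] [MulDistribMulAction G C]
    (ι : A →* B) (π : B →* C) : Prop where
  injective : Function.Injective ι
  surjective : Function.Surjective π
  range_eq_ker : ι.range = π.ker
  mem_center : ∀ a, ι a ∈ Subgroup.center B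
  map_smul_ι : ∀ (g : G) (a : A), ι (g • a) = g • ι a
  map_smul_π : ∀ (g : G) (b : B), π (g • b) = g • π b

/-- `a` represents the image of `π w` under the connecting map `H⁰(G, C) → H¹(G, A)` of the
extension twisted by the cocycle `e`. -/
def IsCentralTwist {G A B : Type*} [Group G] [CommGroup A] [Group B] [MulDistribMulAction G B]
    (ι : A →* B) (e : G → B) (w : B) (a : G → A) : Prop :=
  twist e w = fun g => ι (a g) * e g

namespace IsCentralExtension

variable {G A B C : Type*} [Group G] [CommGroup A] [Group B] [CommGroup C]
  [MulDistribMulAction G A] [MulDistribMulAction G B] [MulDistribMulAction G C]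
  {ι : A →* B} {π : B →* C}

theorem restrict {Γ : Type*} [Group Γ] [MulDistribMulAction Γ A] [MulDistribMulAction Γ B]
    [MulDistribMulAction Γ C] (E : IsCentralExtension Γ ι π) (H : Subgroup Γ) :
    IsCentralExtension H ι π where
  __ := E
  map_smul_ι h := E.map_smul_ι h
  map_smul_π h := E.map_smul_π h

variable (E : IsCentralExtension G ι π)
include E

theorem commute (a : A) (x : B) : ι a * x = x * ι a :=
  (Subgroup.mem_center_iff.1 (E.mem_center a) x).symm

theorem map_ι (a : A) : π (ι a) = 1 :=
  π.mem_ker.1 (E.range_eq_ker ▸ ⟨a, rfl⟩)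

theorem exists_ι_eq {x : B} (hx : π x = 1) : ∃ a, ι a = x :=
  (E.range_eq_ker ▸ π.mem_ker.2 hx : x ∈ ι.range)

theorem twist_ι_mul (e : G → B) (a : G → A) (w : B) :
    twist (fun g => ι (a g) * e g) w = fun g => ι (a g) * twist e w g := by
  ext g
  simp only [twist_apply, mul_assoc]
  rw [← mul_assoc w⁻¹, ← E.commute, mul_assoc]

theorem twist_ι (e : G → B) (α : A) :
    twist e (ι α) = fun g => ι (α⁻¹ * g • α) * e g := by
  ext g
  rw [twist_apply, map_mul, map_inv, ← E.map_smul_ι, mul_assoc, ← E.commute, ← mul_assoc]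

theorem twist_ι_mul_ι (e : G → B) (a : G → A) (α : A) :
    twist (fun g => ι (a g) * e g) (ι α) = fun g => ι (twist a α g) * e g := by
  ext g
  simp only [E.twist_ι_mul, E.twist_ι]
  rw [← mul_assoc, ← map_mul, twist_apply]
  congr 2
  ac_rfl

theorem isCocycle_ι_mul_iff {e : G → B} (he : IsCocycle e) {a : G → A} :
    IsCocycle (fun g => ι (a g) * e g) ↔ IsCocycle a := by
  have key : ∀ g h, ι (a g) * e g * g • (ι (a h) * e h) = ι (a g * g • a h) * e (g * h) := by
    intro g h
    rw [he g h, smul_mul', ← E.map_smul_ι, mul_assoc, ← mul_assoc (e g), ← E.commute, map_mul]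
    group
  simp only [IsCocycle, key, mul_left_inj, E.injective.eq_iff]

theorem exists_ι_mul_eq {e c : G → B} (he : IsCocycle e) (hc : IsCocycle c)
    (h : ∀ g, π (c g) = π (e g)) : ∃ a, IsCocycle a ∧ c = fun g => ι (a g) * e g := by
  choose a ha using fun g => E.exists_ι_eq (x := c g * (e g)⁻¹) (by rw [map_mul, h, map_inv,
    mul_inv_cancel])
  have hca : c = fun g => ι (a g) * e g := by ext g; rw [ha, inv_mul_cancel_right]
  exact ⟨a, (E.isCocycle_ι_mul_iff he).1 (hca ▸ hc), hca⟩

theorem exists_isCentralTwist (e : G → B) {w : B} (hw : ∀ g : G, g • π w = π w) :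
    ∃ a, IsCentralTwist ι e w a := by
  choose a ha using fun g => E.exists_ι_eq (x := twist e w g * (e g)⁻¹) (by
    rw [twist_apply, map_mul, map_mul, map_mul, map_inv, map_inv, E.map_smul_π, hw,
      mul_comm (π w)⁻¹]
    group)
  exact ⟨a, funext fun g => by rw [ha, inv_mul_cancel_right]⟩

end IsCentralExtension

theorem IsCentralTwist.one {G A B : Type*} [Group G] [CommGroup A] [Group B]
    [MulDistribMulAction G B] {ι : A →* B} {e : G → B} : IsCentralTwist ι e 1 1 := by
  ext g; simp

namespace IsCentralTwist

variable {G A B C : Type*} [Group G] [CommGroup A] [Group B] [CommGroup C]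
  [MulDistribMulAction G A] [MulDistribMulAction G B] [MulDistribMulAction G C]
  {ι : A →* B} {π : B →* C} {e : G → B} {w w₁ w₂ : B} {a a₁ a₂ : G → A}

theorem mul (E : IsCentralExtension G ι π) (h₁ : IsCentralTwist ι e w₁ a₁)
    (h₂ : IsCentralTwist ι e w₂ a₂) : IsCentralTwist ι e (w₁ * w₂) (a₁ * a₂) := by
  rw [IsCentralTwist, ← twist_twist e w₁ w₂, h₁, E.twist_ι_mul, h₂]
  ext g
  rw [Pi.mul_apply, map_mul, mul_assoc]

theorem pow (E : IsCentralExtension G ι π) (h : IsCentralTwist ι e w a) (n : ℕ) :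
    IsCentralTwist ι e (w ^ n) (a ^ n) := by
  induction n with
  | zero => rw [pow_zero, pow_zero]; exact one
  | succ n ih => rw [pow_succ, pow_succ]; exact ih.mul E h

theorem finset_prod {κ : Type*} (E : IsCentralExtension G ι π) {s : Finset κ} {w : κ → B}
    {a : κ → G → A} (h : ∀ i ∈ s, IsCentralTwist ι e (w i) (a i)) :
    IsCentralTwist ι e (s.toList.map w).prod (∏ i ∈ s, a i) := by
  suffices ∀ l : List κ, (∀ i ∈ l, IsCentralTwist ι e (w i) (a i)) →
      IsCentralTwist ι e (l.map w).prod (l.map a).prod by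
    rw [← Finset.prod_map_toList]
    exact this _ fun i hi => h i (Finset.mem_toList.1 hi)
  intro l hl
  induction l with
  | nil => exact one
  | cons i l ih =>
    simp only [List.map_cons, List.prod_cons]
    exact (hl i List.mem_cons_self).mul E (ih fun j hj => hl j (List.mem_cons_of_mem i hj))

theorem of_twist_eq (E : IsCentralExtension G ι π)
    (h : twist e w₁ = fun g => ι (a g) * twist e w₂ g) : IsCentralTwist ι e (w₁ * w₂⁻¹) a := by
  rw [IsCentralTwist, ← twist_twist, h, ← E.twist_ι_mul, twist_twist_inv]

theorem isCocycle (E : IsCentralExtension G ι π) (he : IsCocycle e) (h : IsCentralTwist ι e w a) :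
    IsCocycle a :=
  (E.isCocycle_ι_mul_iff he).1 (h ▸ he.twist w)

theorem smul_map_eq (E : IsCentralExtension G ι π) (h : IsCentralTwist ι e w a) (g : G) :
    g • π w = π w := by
  have key := congrArg π (congrFun h g)
  rw [twist_apply, map_mul, map_mul, map_inv, E.map_smul_π, map_mul, E.map_ι, one_mul,
    mul_comm (π w)⁻¹, mul_assoc, mul_eq_left, inv_mul_eq_one] at key
  exact key.symm

theorem unique (E : IsCentralExtension G ι π) (h₁ : IsCentralTwist ι e w a₁)
    (h₂ : IsCentralTwist ι e w a₂) : a₁ = a₂ := by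
  ext g
  exact E.injective (mul_right_cancel (congrFun (h₁.symm.trans h₂) g))

end IsCentralTwist

theorem IsCentralTwist.restrict {Γ A B : Type*} [Group Γ] [CommGroup A] [Group B]
    [MulDistribMulAction Γ B] {ι : A →* B} {e : Γ → B} {w : B} {a : Γ → A}
    (h : IsCentralTwist ι e w a) (H : Subgroup Γ) :
    IsCentralTwist ι (fun h : H => e h) w (fun h : H => a h) :=
  funext fun k => congrFun h k

section Conjugate

variable {Γ : Type*} [Group Γ] (H : Subgroup Γ) [H.Normal]

def conjBy (γ : Γ) : H →* H where
  toFun h := ⟨γ⁻¹ * h * γ, Subgroup.Normal.conj_mem' inferInstance _ h.2 γ⟩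
  map_one' := Subtype.ext (by simp)
  map_mul' g h := Subtype.ext (by simp only [Subgroup.coe_mul]; group)

def conjugate {X : Type*} [Monoid X] [MulDistribMulAction Γ X] (γ : Γ) : (H → X) →* (H → X) where
  toFun f h := γ • f (conjBy H γ h)
  map_one' := by ext; simp
  map_mul' f f' := by ext; simp [smul_mul']

variable {H}

theorem coe_conjBy (γ : Γ) (h : H) : (conjBy H γ h : Γ) = γ⁻¹ * h * γ := rfl

theorem conjugate_apply {X : Type*} [Monoid X] [MulDistribMulAction Γ X] (γ : Γ) (f : H → X)
    (h : H) : conjugate H γ f h = γ • f (conjBy H γ h) :=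
  rfl

theorem smul_conjBy_smul {X : Type*} [MulAction Γ X] (γ : Γ) (h : H) (x : X) :
    γ • (conjBy H γ h : Γ) • x = (h : Γ) • γ • x := by
  rw [smul_smul, smul_smul, coe_conjBy]; group

variable {B : Type*} [Group B] [MulDistribMulAction Γ B]

theorem deltaInvariant_iff {c : H → B} :
    DeltaInvariant H c ↔ ∀ γ, CohomologousOn H (conjugate H γ c) c :=
  Iff.rfl

theorem conjugate_mul (γ₁ γ₂ : Γ) (f : H → B) :
    conjugate H (γ₁ * γ₂) f = conjugate H γ₁ (conjugate H γ₂ f) := by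
  ext h
  simp only [conjugate_apply, mul_smul]
  congr 3
  apply Subtype.ext
  simp only [coe_conjBy]
  group

theorem conjugate_twist (γ : Γ) (f : H → B) (w : B) :
    conjugate H γ (twist f w) = twist (conjugate H γ f) (γ • w) := by
  ext h
  simp only [conjugate_apply, twist_apply, smul_mul', smul_inv', Subgroup.smul_def,
    smul_conjBy_smul]

theorem conjugate_restrict {b : Γ → B} (hb : IsCocycle b) (γ : Γ) :
    conjugate H γ (fun h : H => b h) = twist (fun h : H => b h) (b γ) := by
  ext h
  exact hb.smul_apply_conj γ h

theorem conjugate_coe {f : H → B} (hf : IsCocycleOn H f) (k : H) :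
    conjugate H k f = twist f (f k) := by
  ext h
  exact IsCocycle.smul_apply_conj (G := H) hf k h

theorem isCocycleOn_conjugate {f : H → B} (hf : IsCocycleOn H f) (γ : Γ) :
    IsCocycleOn H (conjugate H γ f) := by
  intro g h
  simp only [conjugate_apply, map_mul, hf _ _, smul_mul', smul_conjBy_smul]

theorem conjugate_map {A : Type*} [Monoid A] [MulDistribMulAction Γ A] (f : A →* B)
    (hf : ∀ (γ : Γ) (a : A), f (γ • a) = γ • f a) (γ : Γ) (a : H → A) :
    conjugate H γ (fun h => f (a h)) = fun h => f (conjugate H γ a h) := by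
  ext h
  simp only [conjugate_apply, hf]

end Conjugate

theorem DeltaInvariant.exists_conjugate_eq_twist {Γ B : Type*} [Group Γ] [Group B]
    [MulDistribMulAction Γ B] {H : Subgroup Γ} [H.Normal] {c : H → B} (hc : DeltaInvariant H c)
    (γ : Γ) : ∃ y, conjugate H γ c = twist c y := by
  obtain ⟨y, hy⟩ := cohomologous_iff.1 (deltaInvariant_iff.1 hc γ)
  exact ⟨y⁻¹, by rw [← twist_twist_inv (conjugate H γ c) y, hy]⟩

theorem DeltaInvariant.map {Γ B C : Type*} [Group Γ] [Group B] [Group C]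
    [MulDistribMulAction Γ B] [MulDistribMulAction Γ C] {H : Subgroup Γ} [H.Normal] {c : H → B}
    (hc : DeltaInvariant H c) (f : B →* C) (hf : ∀ (γ : Γ) (b : B), f (γ • b) = γ • f b) :
    DeltaInvariant H fun h => f (c h) := by
  rw [deltaInvariant_iff] at hc ⊢
  intro γ
  obtain ⟨y, hy⟩ := cohomologous_iff.1 (hc γ)
  exact cohomologous_iff.2 ⟨f y, by
    rw [conjugate_map f hf, ← map_twist (G := H) _ _ f fun h => hf h, hy]⟩

section ConjugateTwist

variable {Γ A B C : Type*} [Group Γ] [CommGroup A] [Group B] [CommGroup C]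
  [MulDistribMulAction Γ A] [MulDistribMulAction Γ B] [MulDistribMulAction Γ C]
  {ι : A →* B} {π : B →* C} {H : Subgroup Γ} [H.Normal]

theorem conjugate_ι_mul (E : IsCentralExtension Γ ι π) (γ : Γ) (a : H → A) (v : H → B) :
    conjugate H γ (fun h => ι (a h) * v h) = fun h => ι (conjugate H γ a h) * conjugate H γ v h :=
  funext fun h => by simp only [conjugate_apply, smul_mul', E.map_smul_ι]

theorem IsCentralTwist.conjugate (E : IsCentralExtension Γ ι π) {v : H → B} {w y : B}
    {a : H → A} {γ : Γ} (hv : conjugate H γ v = twist v y) (h : IsCentralTwist ι v w a) :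
    IsCentralTwist ι v (y * γ • w * y⁻¹) (conjugate H γ a) := by
  apply IsCentralTwist.of_twist_eq (E.restrict H)
  have key := congrArg (_root_.conjugate H γ) h
  rwa [conjugate_twist, hv, twist_twist, conjugate_ι_mul E, hv] at key

theorem IsCentralExtension.isCentralTwist_conjugate_div (E : IsCentralExtension Γ ι π)
    {b : Γ → B} (hb : IsCocycle b) {c : H → B} {a : H → A}
    (hba : (fun h : H => b h) = fun h => ι (a h) * c h) {γ : Γ} {y : B}
    (hc : conjugate H γ c = twist c y) :
    IsCentralTwist ι c (b γ * y⁻¹) (conjugate H γ a / a) := by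
  apply IsCentralTwist.of_twist_eq (E.restrict H)
  have key := conjugate_restrict (H := H) hb γ
  rw [hba, conjugate_ι_mul E, hc, (E.restrict H).twist_ι_mul] at key
  ext h
  rw [Pi.div_apply, div_eq_inv_mul, map_mul, map_inv, mul_assoc, congrFun key h,
    inv_mul_cancel_left]

end ConjugateTwist

section Norm

variable {Γ : Type*} [Group Γ] {H : Subgroup Γ}

theorem smul_coset_eq {X : Type*} [MulAction Γ X] {x : X} (hx : ∀ h : H, (h : Γ) • x = x)
    {γ γ' : Γ} (he : (γ : Γ ⧸ H) = γ') : γ • x = γ' • x := by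
  rw [← mul_inv_cancel_left γ γ', mul_smul]
  exact congrArg _ (hx ⟨_, QuotientGroup.eq.1 he⟩).symm

theorem mk_mul_out (γ : Γ) (q : Γ ⧸ H) : ((γ * q.out : Γ) : Γ ⧸ H) = ((γ • q).out : Γ) := by
  rw [QuotientGroup.out_eq', ← MulAction.Quotient.mk_smul_out, smul_eq_mul]

variable [Fintype (Γ ⧸ H)]

theorem smul_prod_out_smul {X : Type*} [CommMonoid X] [MulDistribMulAction Γ X] {x : X}
    (hx : ∀ h : H, (h : Γ) • x = x) (g : Γ) :
    g • ∏ q : Γ ⧸ H, q.out • x = ∏ q : Γ ⧸ H, q.out • x := by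
  rw [Finset.smul_prod']
  calc ∏ q : Γ ⧸ H, g • q.out • x = ∏ q : Γ ⧸ H, (g • q).out • x :=
        Finset.prod_congr rfl fun q _ => by rw [smul_smul, smul_coset_eq hx (mk_mul_out g q)]
    _ = ∏ q : Γ ⧸ H, q.out • x := (MulAction.bijective g).prod_comp fun q : Γ ⧸ H => q.out • x

variable [H.Normal]

variable (H) in
/-- The restriction to `H` of the corestriction of `f`. -/
noncomputable def conjNorm {A : Type*} [CommGroup A] [MulDistribMulAction Γ A] (f : H → A) :
    H → A :=
  ∏ q : Γ ⧸ H, conjugate H q.out f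

variable {A : Type*} [CommGroup A] [MulDistribMulAction Γ A]

theorem isCocycleOn_conjNorm {f : H → A} (hf : IsCocycleOn H f) :
    IsCocycleOn H (conjNorm H f) :=
  isCocycle_prod (G := H) _ fun q _ => isCocycleOn_conjugate hf q.out

theorem conjNorm_pow (f : H → A) (n : ℕ) : conjNorm H (f ^ n) = conjNorm H f ^ n := by
  simp only [conjNorm, map_pow, Finset.prod_pow]

theorem conjNorm_restrict {a : Γ → A} (ha : IsCocycle a) :
    conjNorm H (fun h : H => a h) =
      twist ((fun h : H => a h) ^ Fintype.card (Γ ⧸ H)) (∏ q : Γ ⧸ H, a q.out) := by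
  simp only [conjNorm, conjugate_restrict ha, prod_twist, Finset.prod_const, Finset.card_univ]

theorem deltaInvariant_conjNorm {f : H → A} (hf : IsCocycleOn H f) :
    DeltaInvariant H (conjNorm H f) := by
  intro γ
  let k : Γ ⧸ H → H := fun q => ⟨_, QuotientGroup.eq.1 (mk_mul_out γ q).symm⟩
  have hk : ∀ q : Γ ⧸ H, γ * q.out = (γ • q).out * k q := fun q => by
    simp only [k, mul_inv_cancel_left]
  apply cohomologous_of_twist_eq (G := H) (b := ∏ q : Γ ⧸ H, (γ • q).out • f (k q))
  calc twist (conjNorm H f) (∏ q : Γ ⧸ H, (γ • q).out • f (k q))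
      = ∏ q : Γ ⧸ H, twist (conjugate H (γ • q).out f) ((γ • q).out • f (k q)) := by
        rw [prod_twist, conjNorm,
          (MulAction.bijective γ).prod_comp fun q : Γ ⧸ H => conjugate H q.out f]
    _ = ∏ q : Γ ⧸ H, conjugate H γ (conjugate H q.out f) := by
        simp only [← conjugate_coe hf, ← conjugate_twist, ← conjugate_mul, hk]
    _ = conjugate H γ (conjNorm H f) := (map_prod _ _ _).symm

end Norm

namespace IsCentralExtension

variable {G A B C : Type*} [Group G] [CommGroup A] [Group B] [CommGroup C]
  [MulDistribMulAction G A] [MulDistribMulAction G B] [MulDistribMulAction G C]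
  {ι : A →* B} {π : B →* C} (E : IsCentralExtension G ι π) {s : G → B} {F : G → G → A}
include E

theorem is2Cocycle_of_defect (hF : ∀ g h, ι (F g h) = s g * g • s h * (s (g * h))⁻¹) :
    Is2Cocycle F := by
  have hs : ∀ g h, s g * g • s h = ι (F g h) * s (g * h) := fun g h => by rw [hF]; group
  intro g h j
  have key : ι (F g h) * ι (F (g * h) j) * s (g * h * j) =
      ι (g • F h j) * ι (F g (h * j)) * s (g * (h * j)) := by
    calc ι (F g h) * ι (F (g * h) j) * s (g * h * j)
        = s g * g • s h * (g * h) • s j := by rw [hs, mul_assoc, ← hs, mul_assoc]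
      _ = s g * g • (s h * h • s j) := by rw [smul_mul', mul_smul, mul_assoc]
      _ = ι (g • F h j) * (s g * g • s (h * j)) := by
        rw [hs, smul_mul', ← E.map_smul_ι, ← mul_assoc, ← E.commute, mul_assoc]
      _ = ι (g • F h j) * ι (F g (h * j)) * s (g * (h * j)) := by rw [hs, mul_assoc]
  rw [mul_assoc g h j, mul_left_inj, ← map_mul, ← map_mul] at key
  rw [mul_comm (F (g * h) j)]
  exact E.injective key.symm

theorem isCocycle_ι_inv_mul_iff (hF : ∀ g h, ι (F g h) = s g * g • s h * (s (g * h))⁻¹)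
    {U : G → A} :
    IsCocycle (fun g => (ι (U g))⁻¹ * s g) ↔ ∀ g h, F g h = U g * g • U h * (U (g * h))⁻¹ := by
  have hs : ∀ g h, s g * g • s h = ι (F g h) * s (g * h) := fun g h => by rw [hF]; group
  have key : ∀ g h, (ι (U g))⁻¹ * s g * g • ((ι (U h))⁻¹ * s h) =
      (ι (U g * g • U h * (F g h)⁻¹))⁻¹ * s (g * h) := by
    intro g h
    rw [smul_mul', smul_inv', ← E.map_smul_ι, ← map_inv, ← map_inv, mul_assoc, ← mul_assoc (s g),
      ← E.commute, mul_assoc, hs, ← mul_assoc, ← mul_assoc, ← map_mul, ← map_mul, ← map_inv]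
    congr 2
    rw [mul_inv, mul_inv, inv_inv]
  simp only [IsCocycle, key, mul_left_inj, inv_inj, E.injective.eq_iff]
  refine forall₂_congr fun g h => ?_
  rw [eq_mul_inv_iff_mul_eq, eq_mul_inv_iff_mul_eq, mul_comm (F g h)]

end IsCentralExtension

section Restriction

variable {Γ : Type*} [Group Γ] (H : Subgroup Γ)

def H1RestrictionInjective (X : Type*) [Group X] [MulDistribMulAction Γ X] : Prop :=
  ∀ c c' : Γ → X, IsCocycle c → IsCocycle c' →
    CohomologousOn H (fun h : H => c h) (fun h : H => c' h) → Cohomologous c c'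

def H1RestrictionSurjective [H.Normal] (X : Type*) [Group X] [MulDistribMulAction Γ X] : Prop :=
  ∀ c : H → X, IsCocycleOn H c → DeltaInvariant H c →
    ∃ b : Γ → X, IsCocycle b ∧ CohomologousOn H (fun h : H => b h) c

def H2RestrictionInjective (X : Type*) [Group X] [MulDistribMulAction Γ X] : Prop :=
  ∀ f : Γ → Γ → X, Is2Cocycle f → Is2CoboundaryOn H (fun g h : H => f g h) → Is2Coboundary f

end Restriction

namespace IsCentralExtension

variable {Γ A B C : Type*} [Group Γ] [CommGroup A] [Group B] [CommGroup C]
  [MulDistribMulAction Γ A] [MulDistribMulAction Γ B] [MulDistribMulAction Γ C]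
  {ι : A →* B} {π : B →* C} {H : Subgroup Γ} (E : IsCentralExtension Γ ι π)
include E

theorem exists_lift (hA : H2RestrictionInjective H A) {d : Γ → C} (hd : IsCocycle d) {c : H → B}
    (hc : IsCocycleOn H c) (hcd : ∀ h : H, π (c h) = d h) :
    ∃ b : Γ → B, IsCocycle b ∧ ∀ g, π (b g) = d g := by
  choose s hs using fun g => E.surjective (d g)
  choose F hF using fun g h => E.exists_ι_eq (x := s g * g • s h * (s (g * h))⁻¹) (by
    rw [map_mul, map_mul, map_inv, E.map_smul_π, hs, hs, hs, hd g h, mul_inv_cancel])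
  choose α hα using fun h : H => E.exists_ι_eq (x := s h * (c h)⁻¹) (by
    rw [map_mul, map_inv, hs, hcd, mul_inv_cancel])
  have hcs : (fun h : H => (ι (α h))⁻¹ * s h) = c := funext fun h => by rw [hα, mul_inv_rev,
    inv_inv, inv_mul_cancel_right]
  have hFH : Is2CoboundaryOn H (fun g h : H => F g h) :=
    ⟨α, ((E.restrict H).isCocycle_ι_inv_mul_iff fun g h => hF g h).1 (hcs ▸ hc)⟩
  obtain ⟨U, hU⟩ := hA F (E.is2Cocycle_of_defect hF) hFH
  exact ⟨fun g => (ι (U g))⁻¹ * s g, (E.isCocycle_ι_inv_mul_iff hF).2 hU,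
    fun g => by rw [map_mul, map_inv, E.map_ι, inv_one, one_mul, hs]⟩

variable [H.Normal] [Fintype (Γ ⧸ H)]

theorem exists_isCentralTwist_restrict {e : Γ → B} (he : IsCocycle e) {a : Γ → A}
    (ha : IsCocycle a) {w : B} (hw : IsCentralTwist ι (fun h : H => e h) w (fun h : H => a h)) :
    ∃ u a', IsCentralTwist ι e u a' ∧ (fun h : H => a' h) =
      twist ((fun h : H => a h) ^ Fintype.card (Γ ⧸ H)) (∏ q : Γ ⧸ H, a q.out) := by
  set W : Γ → B := fun g => e g * g • w * (e g)⁻¹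
  set P : B := ((Finset.univ : Finset (Γ ⧸ H)).toList.map fun q => W q.out).prod
  have hP : IsCentralTwist ι (fun h : H => e h) P (conjNorm H fun h : H => a h) :=
    IsCentralTwist.finset_prod (E.restrict H) fun q _ =>
      hw.conjugate E (conjugate_restrict he q.out)
  have hπP : π P = ∏ q : Γ ⧸ H, q.out • π w := by
    rw [map_list_prod, List.map_map, ← Finset.prod_map_toList]
    congr 2
    ext q
    simp only [W, Function.comp_apply, map_mul, map_inv, E.map_smul_π, mul_inv_cancel_comm]
  obtain ⟨a', ha'⟩ := E.exists_isCentralTwist e (w := P) fun g => by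
    rw [hπP, smul_prod_out_smul (hw.smul_map_eq (E.restrict H))]
  exact ⟨P, a', ha', by rw [← conjNorm_restrict ha, (ha'.restrict H).unique (E.restrict H) hP]⟩

theorem exists_isCentralTwist_conjNorm_div {b : Γ → B} (hb : IsCocycle b) {c : H → B}
    (hc : DeltaInvariant H c) {a : H → A} (hba : (fun h : H => b h) = fun h => ι (a h) * c h) :
    ∃ P, IsCentralTwist ι c P (conjNorm H a / a ^ Fintype.card (Γ ⧸ H)) := by
  choose y hy using hc.exists_conjugate_eq_twist
  refine ⟨((Finset.univ : Finset (Γ ⧸ H)).toList.map fun q : Γ ⧸ H => b q.out * (y q.out)⁻¹).prod,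
    ?_⟩
  convert IsCentralTwist.finset_prod (E.restrict H) fun (q : Γ ⧸ H) _ =>
    E.isCentralTwist_conjugate_div hb hba (hy q.out)
  rw [Finset.prod_div_distrib, Finset.prod_const, Finset.card_univ, conjNorm]

theorem h1RestrictionInjective {m : ℕ} (hm : ∀ α : A, α ^ (Fintype.card (Γ ⧸ H) * m) = α)
    (hA : H1RestrictionInjective H A) (hC : H1RestrictionInjective H C) :
    H1RestrictionInjective H B := by
  intro c c' hc hc' hcc'
  obtain ⟨b₀, hb₀⟩ := cohomologous_iff.1 hcc'
  obtain ⟨x, hx⟩ := cohomologous_iff.1 <| hC _ _ (hc.map π E.map_smul_π) (hc'.map π E.map_smul_π)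
    (cohomologous_iff.2 ⟨π b₀, by rw [← map_twist (G := H) _ _ π fun h => E.map_smul_π h, hb₀]⟩)
  obtain ⟨b, rfl⟩ := E.surjective x
  obtain ⟨a, ha, rfl⟩ := E.exists_ι_mul_eq (hc.twist b) hc' fun g => by
    rw [← congrFun hx g, ← map_twist c b π E.map_smul_π]
  have hw : IsCentralTwist ι (fun h : H => twist c b h) (b⁻¹ * b₀) (fun h : H => a h) := by
    change twist (twist (fun h : H => c h) b) (b⁻¹ * b₀) = _
    rw [twist_twist, mul_inv_cancel_left, hb₀]
  obtain ⟨u, a', hu, hres⟩ := E.exists_isCentralTwist_restrict (hc.twist b) ha hw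
  have hres_pow : (fun h : H => (a' ^ m) h) =
      twist (fun h : H => a h) ((∏ q : Γ ⧸ H, a q.out) ^ m) := by
    change (fun h : H => a' h) ^ m = _
    rw [hres, twist_pow, ← pow_mul]
    congr
    exact funext fun h => hm (a h)
  obtain ⟨α, hα⟩ := cohomologous_iff.1 <| hA a (a' ^ m) ha
    ((hu.isCocycle E (hc.twist b)).pow m) (cohomologous_iff.2 ⟨_, hres_pow.symm⟩)
  refine cohomologous_iff.2 ⟨b * u ^ m * (ι α)⁻¹, ?_⟩
  rw [← twist_twist, ← twist_twist c b, hu.pow E m, ← hα, ← E.twist_ι_mul_ι, twist_twist_inv]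

theorem h1RestrictionSurjective {m : ℕ} (hm : ∀ α : A, α ^ (Fintype.card (Γ ⧸ H) * m) = α)
    (hA : H1RestrictionSurjective H A) (hC : H1RestrictionSurjective H C)
    (hA2 : H2RestrictionInjective H A) : H1RestrictionSurjective H B := by
  intro c hc hcΔ
  obtain ⟨d, hd, hdc⟩ := hC (fun h => π (c h))
    (IsCocycle.map (G := H) hc π fun h => E.map_smul_π h) (hcΔ.map π E.map_smul_π)
  obtain ⟨x, hx⟩ := cohomologous_iff.1 hdc
  obtain ⟨b, hb, hπb⟩ := E.exists_lift hA2 (hd.twist x) hc fun h => (congrFun hx h).symm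
  obtain ⟨a₀, ha₀, hba₀⟩ :=
    (E.restrict H).exists_ι_mul_eq (c := fun h : H => b h) hc (hb.restrict H) fun h => by
      rw [hπb, ← congrFun hx h]; rfl
  obtain ⟨P, hP⟩ := E.exists_isCentralTwist_conjNorm_div hb hcΔ hba₀
  obtain ⟨e, he, hec⟩ := hA (conjNorm H (a₀ ^ m)) (isCocycleOn_conjNorm (ha₀.pow m))
    (deltaInvariant_conjNorm (ha₀.pow m))
  obtain ⟨α, hα⟩ := cohomologous_iff.1 hec
  have hδ : twist (fun h : H => (e h)⁻¹ * a₀ h) α⁻¹ =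
      ((conjNorm H a₀ / a₀ ^ Fintype.card (Γ ⧸ H)) ^ m)⁻¹ := by
    have ha₀m : (a₀ ^ Fintype.card (Γ ⧸ H)) ^ m = a₀ := by
      rw [← pow_mul]; exact funext fun h => hm (a₀ h)
    rw [div_pow, ha₀m, ← conjNorm_pow, ← hα, inv_div, eq_div_iff_mul_eq', twist_mul_twist,
      inv_mul_cancel, twist_one]
    ext h
    simp
  refine ⟨fun g => ι (e g)⁻¹ * b g, (E.isCocycle_ι_mul_iff hb).2 he.inv,
    cohomologous_iff.2 ⟨ι α⁻¹ * P ^ m, ?_⟩⟩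
  have hb' : (fun h : H => ι (e h)⁻¹ * b h) = fun h : H => ι ((e h)⁻¹ * a₀ h) * c h :=
    funext fun h => by rw [congrFun hba₀ h, map_mul, mul_assoc]
  rw [hb', ← twist_twist, (E.restrict H).twist_ι_mul_ι, hδ, (E.restrict H).twist_ι_mul,
    hP.pow (E.restrict H) m]
  ext h
  rw [← mul_assoc, ← map_mul, Pi.inv_apply, inv_mul_cancel, map_one, one_mul]

end IsCentralExtension

theorem exists_pow_mul_eq_self {A : Type*} [Group A] [Finite A] {n : ℕ}
    (hn : n.Coprime (Nat.card A)) : ∃ m, ∀ α : A, α ^ (n * m) = α := by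
  obtain ⟨m, -, hm⟩ := Nat.exists_mul_mod_eq_of_coprime 1 hn Nat.card_pos.ne'
  exact ⟨m, fun α => by rw [← pow_mod_natCard, hm, pow_mod_natCard, pow_one]⟩

/-- Non-abelian inflation–restriction.  Let `0 → A → B → C → 0` be a central extension of
`Γ`-groups, `H ⊴ Γ` with `Δ = Γ/H` finite of order prime to `p` and `A` a finite abelian
`p`-group.  If restriction is bijective on `H¹(−, A)` and `H¹(−, C)` (onto `Δ`-invariants)
and injective on `H²(−, A)`, then the restriction map of pointed sets
`H¹(Γ, B) → H¹(H, B)^Δ` is a bijection (stated here at the level of cocycles: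
injectivity and surjectivity on cohomology classes). -/
theorem stmt12 {p : ℕ} (hp : p.Prime) {Γ A B C : Type*} [Group Γ]
    [CommGroup A] [Group B] [CommGroup C]
    [MulDistribMulAction Γ A] [MulDistribMulAction Γ B] [MulDistribMulAction Γ C]
    [Finite A] (hA : IsPGroup p A)
    (H : Subgroup Γ) [H.Normal] (hidx0 : H.index ≠ 0) (hidx : ¬ p ∣ H.index)
    (ι : A →* B) (π : B →* C)
    (hinj : Function.Injective ι) (hsurj : Function.Surjective π)
    (hexact : ι.range = π.ker)
    (hcentral : ∀ a : A, ι a ∈ Subgroup.center B)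
    (hιequiv : ∀ (γ : Γ) (a : A), ι (γ • a) = γ • ι a)
    (hπequiv : ∀ (γ : Γ) (b : B), π (γ • b) = γ • π b)
    -- restriction is bijective on H¹(−, A):
    (hA1inj : ∀ c c' : Γ → A, IsCocycle c → IsCocycle c' →
      CohomologousOn H (fun h : H => c h) (fun h : H => c' h) → Cohomologous c c')
    (hA1surj : ∀ c : H → A, IsCocycleOn H c → DeltaInvariant H c →
      ∃ b : Γ → A, IsCocycle b ∧ CohomologousOn H (fun h : H => b h) c)
    -- restriction is bijective on H¹(−, C):
    (hC1inj : ∀ c c' : Γ → C, IsCocycle c → IsCocycle c' →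
      CohomologousOn H (fun h : H => c h) (fun h : H => c' h) → Cohomologous c c')
    (hC1surj : ∀ c : H → C, IsCocycleOn H c → DeltaInvariant H c →
      ∃ b : Γ → C, IsCocycle b ∧ CohomologousOn H (fun h : H => b h) c)
    -- restriction is injective on H²(−, A):
    (hA2 : ∀ f : Γ → Γ → A, Is2Cocycle f →
      Is2CoboundaryOn H (fun g h : H => f g h) → Is2Coboundary f) :
    (∀ c c' : Γ → B, IsCocycle c → IsCocycle c' →
      CohomologousOn H (fun h : H => c h) (fun h : H => c' h) → Cohomologous c c') ∧
    (∀ c : H → B, IsCocycleOn H c → DeltaInvariant H c →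
      ∃ b : Γ → B, IsCocycle b ∧ CohomologousOn H (fun h : H => b h) c) := by
  have := Fact.mk hp
  have E : IsCentralExtension Γ ι π := ⟨hinj, hsurj, hexact, hcentral, hιequiv, hπequiv⟩
  have : Finite (Γ ⧸ H) := Nat.finite_of_card_ne_zero hidx0
  let : Fintype (Γ ⧸ H) := Fintype.ofFinite _
  have hcop : (Fintype.card (Γ ⧸ H)).Coprime (Nat.card A) := by
    obtain ⟨k, hk⟩ := hA.exists_card_eq
    rw [← Nat.card_eq_fintype_card, ← Subgroup.index_eq_card, hk]
    exact Nat.Coprime.pow_right k (Nat.coprime_comm.1 (hp.coprime_iff_not_dvd.2 hidx))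
  obtain ⟨m, hm⟩ := exists_pow_mul_eq_self hcop
  exact ⟨E.h1RestrictionInjective hm hA1inj hC1inj,
    E.h1RestrictionSurjective hm hA1surj hC1surj hA2⟩
end

section
/- Let Γ^disc = ⟨x_0, ..., x_{n+1} | R⟩ be the one-relator group with R = x_0^q(x_0,x_1)⋯(x_n,x_{n+1}), and let A be a finite F_p-vector space with a Γ^disc-action factoring through a finite p-group. Suppose: (a) H^i(Γ^disc, F_p) ≅ H^i(G, F_p) for i = 1, 2 for a profinite group G with compatible action, (b) H³(Γ^disc, F_p) = 0 = H³(G, F_p). Then by induction on dim A using the five lemma applied to the long exact sequences of 0 → F_p → A → A' → 0, the comparison maps H¹(G, A) → H¹(Γ^disc, A) and H²(G, A) → H²(Γ^disc, A) are isomorphisms. -/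
/-!
Since `G` acts on the nonzero `𝔽_p`-vector space `A` through a `p`-group, it fixes a nonzero
vector `a`, which gives a short exact sequence `0 → 𝔽_p → A → A ⧸ ⟨a⟩ → 0` of `G`-modules. By
induction on `|A|`, restriction along `φ` is bijective on `H¹` and `H²` for `A ⧸ ⟨a⟩`, and it is so
for `𝔽_p` by hypothesis; the five lemma, run as explicit diagram chases on inhomogeneous cochains,
transfers bijectivity to `A`. Besides `H¹` and `H²`, the chases use that `Γ`-invariants of
`A ⧸ ⟨a⟩` are `G`-invariant (density of the image of `φ`), and that restriction is injective on
`H³(−, 𝔽_p)`, which is automatic as `H³(G, 𝔽_p) = 0`.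
-/

namespace Representation

section Cochains

variable {k G M : Type*} [Semiring k] [Monoid G] [AddCommGroup M] [Module k M]
  (ρ : Representation k G M)

def d₀₁ : M →+ (G → M) :=
  AddMonoidHom.mk' (fun a g => ρ g a - a) fun a b => by
    ext g; simp only [Pi.add_apply, map_add]; abel

def d₁₂ : (G → M) →+ (G → G → M) :=
  AddMonoidHom.mk' (fun c g h => ρ g (c h) - c (g * h) + c g) fun c c' => by
    ext g h; simp only [Pi.add_apply, map_add]; abel

def d₂₃ : (G → G → M) →+ (G → G → G → M) :=
  AddMonoidHom.mk' (fun f g h j => ρ g (f h j) - f (g * h) j + f g (h * j) - f g h) fun f f' => by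
    ext g h j; simp only [Pi.add_apply, map_add]; abel

def d₃₄ : (G → G → G → M) →+ (G → G → G → G → M) :=
  AddMonoidHom.mk'
    (fun F g h j l => ρ g (F h j l) - F (g * h) j l + F g (h * j) l - F g h (j * l) + F g h j)
    fun F F' => by ext g h j l; simp only [Pi.add_apply, map_add]; abel

@[simp] lemma d₀₁_apply (a : M) (g : G) : ρ.d₀₁ a g = ρ g a - a := rfl

@[simp] lemma d₁₂_apply (c : G → M) (g h : G) :
    ρ.d₁₂ c g h = ρ g (c h) - c (g * h) + c g := rfl

@[simp] lemma d₂₃_apply (f : G → G → M) (g h j : G) :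
    ρ.d₂₃ f g h j = ρ g (f h j) - f (g * h) j + f g (h * j) - f g h := rfl

@[simp] lemma d₃₄_apply (F : G → G → G → M) (g h j l : G) :
    ρ.d₃₄ F g h j l = ρ g (F h j l) - F (g * h) j l + F g (h * j) l - F g h (j * l) + F g h j := rfl

lemma d₁₂_d₀₁ (a : M) : ρ.d₁₂ (ρ.d₀₁ a) = 0 := by
  ext g h
  simp only [d₁₂_apply, d₀₁_apply, map_sub, map_mul, Module.End.mul_apply, Pi.zero_apply]
  abel

lemma d₂₃_d₁₂ (c : G → M) : ρ.d₂₃ (ρ.d₁₂ c) = 0 := by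
  ext g h j
  simp only [d₂₃_apply, d₁₂_apply, map_add, map_sub, map_mul, Module.End.mul_apply, mul_assoc]
  simp only [Pi.zero_apply]; abel

lemma d₃₄_d₂₃ (f : G → G → M) : ρ.d₃₄ (ρ.d₂₃ f) = 0 := by
  ext g h j l
  simp only [d₃₄_apply, d₂₃_apply, map_add, map_sub, map_mul, Module.End.mul_apply, mul_assoc]
  simp only [Pi.zero_apply]; abel

end Cochains

section Cocycles

variable {k G Γ M N : Type*} [Semiring k] [Monoid G] [Monoid Γ] [AddCommGroup M] [Module k M]
  [AddCommGroup N] [Module k N] (ρ : Representation k G M)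

def IsCocycle₁ (c : G → M) : Prop := ∀ g h, c (g * h) = c g + ρ g (c h)

def IsCoboundary₁ (c : G → M) : Prop := ∃ a, ∀ g, c g = ρ.d₀₁ a g

def IsCocycle₂ (f : G → G → M) : Prop := ∀ g h j, ρ.d₂₃ f g h j = 0

def IsCoboundary₂ (f : G → G → M) : Prop := ∃ u, ∀ g h, f g h = ρ.d₁₂ u g h

def IsCocycle₃ (F : G → G → G → M) : Prop := ∀ g h j l, ρ.d₃₄ F g h j l = 0

def IsCoboundary₃ (F : G → G → G → M) : Prop := ∃ f, ∀ g h j, F g h j = ρ.d₂₃ f g h j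

variable {ρ}

lemma isCocycle₁_iff {c : G → M} : IsCocycle₁ ρ c ↔ ∀ g h, ρ.d₁₂ c g h = 0 := by
  refine forall₂_congr fun g h => ?_
  rw [d₁₂_apply]
  constructor <;> intro H
  · rw [H]; abel
  · rw [← sub_eq_zero, ← neg_eq_zero, ← H]; abel

lemma isCocycle₁_d₀₁ (a : M) : IsCocycle₁ ρ (ρ.d₀₁ a) :=
  isCocycle₁_iff.2 fun g h => by rw [d₁₂_d₀₁, Pi.zero_apply, Pi.zero_apply]

lemma isCocycle₂_d₁₂ (c : G → M) : IsCocycle₂ ρ (ρ.d₁₂ c) :=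
  fun g h j => by rw [d₂₃_d₁₂, Pi.zero_apply, Pi.zero_apply, Pi.zero_apply]

lemma isCocycle₃_d₂₃ (f : G → G → M) : IsCocycle₃ ρ (ρ.d₂₃ f) :=
  fun g h j l => by rw [d₃₄_d₂₃]; rfl

lemma IsCocycle₁.add {c c' : G → M} (hc : IsCocycle₁ ρ c) (hc' : IsCocycle₁ ρ c') :
    IsCocycle₁ ρ (c + c') :=
  isCocycle₁_iff.2 fun g h => by
    rw [map_add, Pi.add_apply, Pi.add_apply, isCocycle₁_iff.1 hc, isCocycle₁_iff.1 hc', add_zero]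

lemma IsCocycle₁.sub {c c' : G → M} (hc : IsCocycle₁ ρ c) (hc' : IsCocycle₁ ρ c') :
    IsCocycle₁ ρ (c - c') :=
  isCocycle₁_iff.2 fun g h => by
    rw [map_sub, Pi.sub_apply, Pi.sub_apply, isCocycle₁_iff.1 hc, isCocycle₁_iff.1 hc', sub_zero]

lemma IsCocycle₂.add {f f' : G → G → M} (hf : IsCocycle₂ ρ f) (hf' : IsCocycle₂ ρ f') :
    IsCocycle₂ ρ (f + f') :=
  fun g h j => by simp only [map_add, Pi.add_apply, hf g h j, hf' g h j, add_zero]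

lemma IsCocycle₂.sub {f f' : G → G → M} (hf : IsCocycle₂ ρ f) (hf' : IsCocycle₂ ρ f') :
    IsCocycle₂ ρ (f - f') :=
  fun g h j => by simp only [map_sub, Pi.sub_apply, hf g h j, hf' g h j, sub_zero]

lemma IsCocycle₁.comp (φ : Γ →* G) {c : G → M} (hc : IsCocycle₁ ρ c) :
    IsCocycle₁ (ρ.comp φ) (c ∘ φ) :=
  fun γ δ => by simp only [Function.comp_apply, map_mul, MonoidHom.comp_apply]; exact hc _ _

lemma d₀₁_comp (φ : Γ →* G) (a : M) (γ : Γ) : d₀₁ (ρ.comp φ) a γ = ρ.d₀₁ a (φ γ) := rfl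

lemma d₁₂_comp (φ : Γ →* G) (c : G → M) (γ δ : Γ) :
    d₁₂ (ρ.comp φ) (c ∘ φ) γ δ = ρ.d₁₂ c (φ γ) (φ δ) := by
  simp only [d₁₂_apply, map_mul, MonoidHom.comp_apply, Function.comp_apply]

lemma d₂₃_comp (φ : Γ →* G) (f : G → G → M) (γ δ ε : Γ) :
    d₂₃ (ρ.comp φ) (fun γ δ => f (φ γ) (φ δ)) γ δ ε = ρ.d₂₃ f (φ γ) (φ δ) (φ ε) := by
  simp only [d₂₃_apply, map_mul, MonoidHom.comp_apply]

lemma IsCocycle₂.comp (φ : Γ →* G) {f : G → G → M} (hf : IsCocycle₂ ρ f) :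
    IsCocycle₂ (ρ.comp φ) (fun γ δ => f (φ γ) (φ δ)) :=
  fun γ δ ε => by rw [d₂₃_comp, hf]

section Intertwining

variable {σ : Representation k G N} {f : M →ₗ[k] N}

lemma IsIntertwiningMap.restrict (hf : IsIntertwiningMap ρ σ f) (φ : Γ →* G) :
    IsIntertwiningMap (ρ.comp φ) (σ.comp φ) f :=
  ⟨fun γ => hf.isIntertwining (φ γ)⟩

lemma IsIntertwiningMap.map_d₀₁ (hf : IsIntertwiningMap ρ σ f) (a : M) (g : G) :
    f (ρ.d₀₁ a g) = σ.d₀₁ (f a) g := by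
  simp only [d₀₁_apply, map_sub, hf.isIntertwining]

lemma IsIntertwiningMap.map_d₁₂ (hf : IsIntertwiningMap ρ σ f) (c : G → M) (g h : G) :
    f (ρ.d₁₂ c g h) = σ.d₁₂ (f ∘ c) g h := by
  simp only [d₁₂_apply, map_add, map_sub, hf.isIntertwining, Function.comp_apply]

lemma IsIntertwiningMap.map_d₂₃ (hf : IsIntertwiningMap ρ σ f) (u : G → G → M) (g h j : G) :
    f (ρ.d₂₃ u g h j) = σ.d₂₃ (fun g h => f (u g h)) g h j := by
  simp only [d₂₃_apply, map_sub, map_add, hf.isIntertwining]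

lemma IsIntertwiningMap.map_d₃₄ (hf : IsIntertwiningMap ρ σ f) (F : G → G → G → M) (g h j l : G) :
    f (ρ.d₃₄ F g h j l) = σ.d₃₄ (fun g h j => f (F g h j)) g h j l := by
  simp only [d₃₄_apply, map_sub, map_add, hf.isIntertwining]

lemma IsCocycle₁.map (hf : IsIntertwiningMap ρ σ f) {c : G → M} (hc : IsCocycle₁ ρ c) :
    IsCocycle₁ σ (f ∘ c) :=
  fun g h => by simp only [Function.comp_apply, hc g h, map_add, hf.isIntertwining]

lemma IsCocycle₂.map (hf : IsIntertwiningMap ρ σ f) {u : G → G → M} (hu : IsCocycle₂ ρ u) :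
    IsCocycle₂ σ (fun g h => f (u g h)) :=
  fun g h j => by rw [← hf.map_d₂₃, hu, map_zero]

lemma IsCocycle₁.of_map (hf : IsIntertwiningMap ρ σ f) (hinj : Function.Injective f)
    {c : G → M} (hc : IsCocycle₁ σ (f ∘ c)) : IsCocycle₁ ρ c :=
  isCocycle₁_iff.2 fun g h => hinj <| by
    rw [hf.map_d₁₂, map_zero, isCocycle₁_iff.1 hc]

lemma IsCocycle₂.of_map (hf : IsIntertwiningMap ρ σ f) (hinj : Function.Injective f)
    {u : G → G → M} (hu : IsCocycle₂ σ (fun g h => f (u g h))) : IsCocycle₂ ρ u :=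
  fun g h j => hinj <| by rw [hf.map_d₂₃, map_zero, hu]

lemma IsCocycle₃.of_map (hf : IsIntertwiningMap ρ σ f) (hinj : Function.Injective f)
    {F : G → G → G → M} (hF : IsCocycle₃ σ (fun g h j => f (F g h j))) : IsCocycle₃ ρ F :=
  fun g h j l => hinj <| by rw [hf.map_d₃₄, map_zero, hF]

end Intertwining

end Cocycles

section Restriction

variable {k G Γ M : Type*} [Semiring k] [Monoid G] [Monoid Γ] [AddCommGroup M] [Module k M]
  (φ : Γ →* G) (ρ : Representation k G M)

def ResSurjective₀ : Prop := ∀ a : M, (∀ γ, ρ (φ γ) a = a) → ∀ g, ρ g a = a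

def ResInjective₁ : Prop :=
  ∀ c : G → M, IsCocycle₁ ρ c → IsCoboundary₁ (ρ.comp φ) (c ∘ φ) → IsCoboundary₁ ρ c

def ResSurjective₁ : Prop :=
  ∀ c : Γ → M, IsCocycle₁ (ρ.comp φ) c →
    ∃ c' : G → M, IsCocycle₁ ρ c' ∧ IsCoboundary₁ (ρ.comp φ) (c - c' ∘ φ)

def ResInjective₂ : Prop :=
  ∀ f : G → G → M, IsCocycle₂ ρ f →
    IsCoboundary₂ (ρ.comp φ) (fun γ δ => f (φ γ) (φ δ)) → IsCoboundary₂ ρ f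

def ResSurjective₂ : Prop :=
  ∀ f : Γ → Γ → M, IsCocycle₂ (ρ.comp φ) f →
    ∃ f' : G → G → M, IsCocycle₂ ρ f' ∧
      IsCoboundary₂ (ρ.comp φ) (fun γ δ => f γ δ - f' (φ γ) (φ δ))

def ResInjective₃ : Prop :=
  ∀ F : G → G → G → M, IsCocycle₃ ρ F →
    IsCoboundary₃ (ρ.comp φ) (fun γ δ ε => F (φ γ) (φ δ) (φ ε)) → IsCoboundary₃ ρ F

structure ResBijective₁₂ : Prop where
  injective₁ : ResInjective₁ φ ρ
  surjective₁ : ResSurjective₁ φ ρ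
  injective₂ : ResInjective₂ φ ρ
  surjective₂ : ResSurjective₂ φ ρ

lemma resSurjective₀_of_forall_exists_eq (h : ∀ g, ∃ γ, ρ g = ρ (φ γ)) : ResSurjective₀ φ ρ :=
  fun a ha g => by
    obtain ⟨γ, hγ⟩ := h g
    rw [hγ, ha]

lemma ResBijective₁₂.of_subsingleton [Subsingleton M] : ResBijective₁₂ φ ρ where
  injective₁ _ _ _ := ⟨0, fun _ => Subsingleton.elim _ _⟩
  surjective₁ _ _ := ⟨0, fun _ _ => Subsingleton.elim _ _, 0, fun _ => Subsingleton.elim _ _⟩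
  injective₂ _ _ _ := ⟨0, fun _ _ => Subsingleton.elim _ _⟩
  surjective₂ _ _ := ⟨0, fun _ _ _ => Subsingleton.elim _ _, 0, fun _ _ => Subsingleton.elim _ _⟩

lemma resInjective₁_trivial
    (h : ∀ c c' : G → M, (∀ g h, c (g * h) = c g + c h) → (∀ g h, c' (g * h) = c' g + c' h) →
      (∀ γ, c (φ γ) = c' (φ γ)) → c = c') :
    ResInjective₁ φ (trivial k G M) := by
  rintro c hc ⟨a, ha⟩
  refine ⟨0, fun g => ?_⟩
  rw [h c 0 hc (fun _ _ => (add_zero 0).symm) fun γ => by simpa using ha γ]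
  simp

lemma resSurjective₁_trivial
    (h : ∀ c : Γ → M, (∀ γ δ, c (γ * δ) = c γ + c δ) →
      ∃ c' : G → M, (∀ g h, c' (g * h) = c' g + c' h) ∧ ∀ γ, c γ = c' (φ γ)) :
    ResSurjective₁ φ (trivial k G M) := by
  intro c hc
  obtain ⟨c', hc', hcc'⟩ := h c hc
  exact ⟨c', hc', 0, fun γ => by simp [hcc' γ]⟩

end Restriction

section ShortExact

variable {k G Γ B A C : Type*} [Semiring k] [Monoid G] [Monoid Γ]
  [AddCommGroup B] [Module k B] [AddCommGroup A] [Module k A] [AddCommGroup C] [Module k C]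
  {ρB : Representation k G B} {ρA : Representation k G A} {ρC : Representation k G C}
  {i : B →ₗ[k] A} {π : A →ₗ[k] C} {φ : Γ →* G}

variable (ρB ρA ρC i π) in
structure IsShortExact : Prop where
  isIntertwiningMap_left : IsIntertwiningMap ρB ρA i
  isIntertwiningMap_right : IsIntertwiningMap ρA ρC π
  injective : Function.Injective i
  surjective : Function.Surjective π
  exact : Function.Exact i π

namespace IsShortExact

lemma exists_lift (hs : IsShortExact ρB ρA ρC i π) {a : A} (ha : π a = 0) : ∃ b, i b = a :=
  (hs.exact a).1 ha

lemma exists_section (hs : IsShortExact ρB ρA ρC i π) : ∃ σ : C → A, ∀ x, π (σ x) = x :=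
  hs.surjective.hasRightInverse

lemma exists_isCocycle₁_lift (hs : IsShortExact ρB ρA ρC i π) {c : G → A}
    (hc : IsCocycle₁ ρA c) (hπc : ∀ g, π (c g) = 0) :
    ∃ b, IsCocycle₁ ρB b ∧ ∀ g, i (b g) = c g := by
  choose b hb using fun g => hs.exists_lift (hπc g)
  refine ⟨b, .of_map hs.isIntertwiningMap_left hs.injective ?_, hb⟩
  rwa [show i ∘ b = c from funext hb]

lemma exists_isCocycle₂_lift (hs : IsShortExact ρB ρA ρC i π) {f : G → G → A}
    (hf : IsCocycle₂ ρA f) (hπf : ∀ g h, π (f g h) = 0) :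
    ∃ b, IsCocycle₂ ρB b ∧ ∀ g h, i (b g h) = f g h := by
  choose b hb using fun g h => hs.exists_lift (hπf g h)
  refine ⟨b, .of_map hs.isIntertwiningMap_left hs.injective ?_, hb⟩
  simpa only [hb] using hf

lemma exists_isCocycle₃_lift (hs : IsShortExact ρB ρA ρC i π) {F : G → G → G → A}
    (hF : IsCocycle₃ ρA F) (hπF : ∀ g h j, π (F g h j) = 0) :
    ∃ b, IsCocycle₃ ρB b ∧ ∀ g h j, i (b g h j) = F g h j := by
  choose b hb using fun g h j => hs.exists_lift (hπF g h j)
  refine ⟨b, .of_map hs.isIntertwiningMap_left hs.injective ?_, hb⟩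
  simpa only [hb] using hF

theorem isCoboundary₁_of_map_eq_zero (hs : IsShortExact ρB ρA ρC i π)
    (hC₀ : ResSurjective₀ φ ρC) (hB : ResInjective₁ φ ρB) {c : G → A} (hc : IsCocycle₁ ρA c)
    (hπc : ∀ g, π (c g) = 0) (hres : IsCoboundary₁ (ρA.comp φ) (c ∘ φ)) :
    IsCoboundary₁ ρA c := by
  obtain ⟨a, ha⟩ := hres
  have hi := hs.isIntertwiningMap_left
  have hπ := hs.isIntertwiningMap_right
  have hinv : ∀ g, ρC g (π a) = π a := hC₀ (π a) fun γ => by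
    have h := congrArg π (ha γ)
    rw [Function.comp_apply, hπc, d₀₁_comp, hπ.map_d₀₁, d₀₁_apply] at h
    exact sub_eq_zero.1 h.symm
  obtain ⟨b, hb, hib⟩ := hs.exists_isCocycle₁_lift (hc.sub (isCocycle₁_d₀₁ a)) fun g => by
    rw [Pi.sub_apply, map_sub, hπc, hπ.map_d₀₁, d₀₁_apply, hinv, sub_self, sub_self]
  obtain ⟨b₀, hb₀⟩ := hB b hb ⟨0, fun γ => hs.injective <| by
    rw [Function.comp_apply, hib, map_zero, Pi.zero_apply, map_zero, Pi.sub_apply,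
      ← Function.comp_apply (f := c), ha γ, d₀₁_comp, sub_self]⟩
  refine ⟨a + i b₀, fun g => ?_⟩
  have h := hib g
  rw [hb₀ g, hi.map_d₀₁, Pi.sub_apply] at h
  rw [map_add, Pi.add_apply, h]
  abel

theorem isCoboundary₂_of_map_eq_zero (hs : IsShortExact ρB ρA ρC i π)
    (hC : ResSurjective₁ φ ρC) (hB : ResInjective₂ φ ρB) {f : G → G → A} (hf : IsCocycle₂ ρA f)
    (hπf : ∀ g h, π (f g h) = 0) (hres : IsCoboundary₂ (ρA.comp φ) (fun γ δ => f (φ γ) (φ δ))) :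
    IsCoboundary₂ ρA f := by
  obtain ⟨u, hu⟩ := hres
  have hi := hs.isIntertwiningMap_left
  have hπ := hs.isIntertwiningMap_right
  obtain ⟨σ, hσ⟩ := hs.exists_section
  obtain ⟨v, hv, a, ha⟩ := hC (π ∘ u) <| isCocycle₁_iff.2 fun γ δ => by
    rw [← (hπ.restrict φ).map_d₁₂, ← hu, hπf]
  have hπσ : π ∘ (σ ∘ v) = v := funext fun g => hσ (v g)
  obtain ⟨f₂, hf₂, hif₂⟩ := hs.exists_isCocycle₂_lift (hf.sub (isCocycle₂_d₁₂ (σ ∘ v)))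
    fun g h => by
      simp only [Pi.sub_apply, map_sub, hπf, hπ.map_d₁₂, hπσ, isCocycle₁_iff.1 hv, sub_zero]
  choose u₂ hu₂ using fun γ => hs.exists_lift
    (a := u γ - σ (v (φ γ)) - d₀₁ (ρA.comp φ) (σ a) γ) <| by
      rw [map_sub, map_sub, hσ, d₀₁_comp, hπ.map_d₀₁, hσ, ← d₀₁_comp, ← ha γ]
      simp only [Pi.sub_apply, Function.comp_apply, sub_self]
  obtain ⟨w, hw⟩ := hB f₂ hf₂ ⟨u₂, fun γ δ => hs.injective <| by
    rw [(hi.restrict φ).map_d₁₂, hif₂,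
      show i ∘ u₂ = u - (σ ∘ v) ∘ φ - d₀₁ (ρA.comp φ) (σ a) from funext hu₂]
    simp only [map_sub, d₁₂_d₀₁, Pi.sub_apply, d₁₂_comp, ← hu γ δ, Pi.zero_apply, sub_zero]⟩
  refine ⟨i ∘ w + σ ∘ v, fun g h => ?_⟩
  rw [map_add, Pi.add_apply, Pi.add_apply, ← hi.map_d₁₂, ← hw, hif₂]
  simp only [Pi.sub_apply, sub_add_cancel]

theorem exists_isCocycle₁_of_map_d₁₂_eq_zero (hs : IsShortExact ρB ρA ρC i π)
    (hB₁ : ResSurjective₁ φ ρB) (hB₂ : ResInjective₂ φ ρB) {c : Γ → A}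
    (hc : IsCocycle₁ (ρA.comp φ) c) {c' : G → A} (hc' : ∀ g h, π (ρA.d₁₂ c' g h) = 0)
    (hcc' : ∀ γ, π (c γ - c' (φ γ)) = 0) :
    ∃ c'' : G → A, IsCocycle₁ ρA c'' ∧ IsCoboundary₁ (ρA.comp φ) (c - c'' ∘ φ) := by
  have hi := hs.isIntertwiningMap_left
  obtain ⟨f, hf, hif⟩ := hs.exists_isCocycle₂_lift (isCocycle₂_d₁₂ c') hc'
  choose u hu using fun γ => hs.exists_lift (hcc' γ)
  obtain ⟨w, hw⟩ := hB₂ f hf ⟨-u, fun γ δ => hs.injective <| by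
    rw [(hi.restrict φ).map_d₁₂, hif, ← sub_eq_zero, ← isCocycle₁_iff.1 hc γ δ]
    simp only [d₁₂_apply, Function.comp_apply, Pi.neg_apply, map_neg, hu, map_sub,
      MonoidHom.comp_apply, map_mul]
    abel⟩
  have hc₁ : IsCocycle₁ ρA (c' - i ∘ w) := isCocycle₁_iff.2 fun g h => by
    rw [map_sub, Pi.sub_apply, Pi.sub_apply, ← hi.map_d₁₂, ← hw, hif, sub_self]
  have hiu : i ∘ (u + w ∘ φ) = c - (c' - i ∘ w) ∘ φ := funext fun γ => by
    simp only [Function.comp_apply, Pi.add_apply, Pi.sub_apply, map_add, hu]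
    abel
  obtain ⟨c₀, hc₀, b, hb⟩ := hB₁ (u + w ∘ φ) <|
    .of_map (hi.restrict φ) hs.injective (hiu ▸ hc.sub (hc₁.comp φ))
  refine ⟨c' - i ∘ w + i ∘ c₀, hc₁.add (hc₀.map hi), i b, fun γ => ?_⟩
  have h := congrArg i (hb γ)
  rw [(hi.restrict φ).map_d₀₁, Pi.sub_apply, map_sub, ← Function.comp_apply (f := i), hiu] at h
  rw [← h]
  simp only [Pi.sub_apply, Pi.add_apply, Function.comp_apply]
  abel

theorem exists_isCocycle₂_of_map_d₂₃_eq_zero (hs : IsShortExact ρB ρA ρC i π)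
    (hB₂ : ResSurjective₂ φ ρB) (hB₃ : ResInjective₃ φ ρB) {f : Γ → Γ → A}
    (hf : IsCocycle₂ (ρA.comp φ) f) {f' : G → G → A}
    (hf' : ∀ g h j, π (ρA.d₂₃ f' g h j) = 0) (hff' : ∀ γ δ, π (f γ δ - f' (φ γ) (φ δ)) = 0) :
    ∃ f'' : G → G → A, IsCocycle₂ ρA f'' ∧
      IsCoboundary₂ (ρA.comp φ) (fun γ δ => f γ δ - f'' (φ γ) (φ δ)) := by
  have hi := hs.isIntertwiningMap_left
  obtain ⟨F, hF, hiF⟩ := hs.exists_isCocycle₃_lift (isCocycle₃_d₂₃ f') hf'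
  choose e he using fun γ δ => hs.exists_lift (hff' γ δ)
  obtain ⟨m, hm⟩ := hB₃ F hF ⟨-e, fun γ δ ε => hs.injective <| by
    rw [(hi.restrict φ).map_d₂₃, hiF, ← sub_eq_zero, ← hf γ δ ε]
    simp only [d₂₃_apply, Pi.neg_apply, map_neg, he, map_sub, MonoidHom.comp_apply, map_mul]
    abel⟩
  have hf₀ : IsCocycle₂ ρA (f' - fun g h => i (m g h)) := fun g h j => by
    rw [map_sub, Pi.sub_apply, Pi.sub_apply, Pi.sub_apply, ← hi.map_d₂₃, ← hm, hiF, sub_self]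
  have hie : (fun γ δ => i ((e + fun γ δ => m (φ γ) (φ δ)) γ δ)) =
      fun γ δ => f γ δ - (f' - fun g h => i (m g h)) (φ γ) (φ δ) := by
    ext γ δ
    simp only [Pi.add_apply, Pi.sub_apply, map_add, he]
    abel
  obtain ⟨f₂, hf₂, v, hv⟩ := hB₂ (e + fun γ δ => m (φ γ) (φ δ)) <|
    .of_map (hi.restrict φ) hs.injective (hie ▸ hf.sub (hf₀.comp φ))
  refine ⟨f' - (fun g h => i (m g h)) + fun g h => i (f₂ g h), hf₀.add (hf₂.map hi),
    i ∘ v, fun γ δ => ?_⟩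
  have h := congrArg i (hv γ δ)
  rw [(hi.restrict φ).map_d₁₂, map_sub, congrFun₂ hie] at h
  rw [← h]
  simp only [Pi.sub_apply, Pi.add_apply]
  abel

theorem resInjective₁ (hs : IsShortExact ρB ρA ρC i π) (hC₀ : ResSurjective₀ φ ρC)
    (hB : ResInjective₁ φ ρB) (hC : ResInjective₁ φ ρC) : ResInjective₁ φ ρA := by
  rintro c hc ⟨a, ha⟩
  have hπ := hs.isIntertwiningMap_right
  obtain ⟨σ, hσ⟩ := hs.exists_section
  obtain ⟨a', ha'⟩ := hC (π ∘ c) (hc.map hπ) ⟨π a, fun γ => by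
    rw [Function.comp_apply, Function.comp_apply, ← Function.comp_apply (f := c), ha γ,
      d₀₁_comp, hπ.map_d₀₁, ← d₀₁_comp]⟩
  obtain ⟨a'', ha''⟩ := hs.isCoboundary₁_of_map_eq_zero hC₀ hB (hc.sub (isCocycle₁_d₀₁ (σ a')))
    (fun g => by
      rw [Pi.sub_apply, map_sub, hπ.map_d₀₁, hσ, ← Function.comp_apply (f := π), ha' g, sub_self])
    ⟨a - σ a', fun γ => by
      rw [Function.comp_apply, Pi.sub_apply, ← Function.comp_apply (f := c), ha γ, map_sub,
        Pi.sub_apply, d₀₁_comp, d₀₁_comp]⟩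
  exact ⟨a'' + σ a', fun g => by
    rw [map_add, Pi.add_apply, ← ha'' g, Pi.sub_apply, sub_add_cancel]⟩

theorem resSurjective₁ (hs : IsShortExact ρB ρA ρC i π) (hB₁ : ResSurjective₁ φ ρB)
    (hB₂ : ResInjective₂ φ ρB) (hC : ResSurjective₁ φ ρC) : ResSurjective₁ φ ρA := by
  intro c hc
  have hπ := hs.isIntertwiningMap_right
  obtain ⟨σ, hσ⟩ := hs.exists_section
  obtain ⟨c', hc', a', ha'⟩ := hC (π ∘ c) (hc.map (hπ.restrict φ))
  obtain ⟨c'', hc'', a, ha⟩ := hs.exists_isCocycle₁_of_map_d₁₂_eq_zero hB₁ hB₂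
    (hc.sub (isCocycle₁_d₀₁ (σ a'))) (c' := σ ∘ c')
    (fun g h => by
      rw [hπ.map_d₁₂, show π ∘ (σ ∘ c') = c' from funext fun g => hσ _, isCocycle₁_iff.1 hc'])
    (fun γ => by
      have h := ha' γ
      simp only [Pi.sub_apply, Function.comp_apply, map_sub, hσ, (hπ.restrict φ).map_d₀₁] at h ⊢
      rw [← h]
      abel)
  refine ⟨c'', hc'', a + σ a', fun γ => ?_⟩
  rw [map_add, Pi.add_apply, ← ha γ]
  simp only [Pi.sub_apply]
  abel

theorem resInjective₂ (hs : IsShortExact ρB ρA ρC i π) (hB : ResInjective₂ φ ρB)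
    (hC₁ : ResSurjective₁ φ ρC) (hC : ResInjective₂ φ ρC) : ResInjective₂ φ ρA := by
  rintro f hf ⟨u, hu⟩
  beta_reduce at hu
  have hπ := hs.isIntertwiningMap_right
  obtain ⟨σ, hσ⟩ := hs.exists_section
  obtain ⟨u', hu'⟩ := hC (fun g h => π (f g h)) (hf.map hπ) ⟨π ∘ u, fun γ δ => by
    beta_reduce
    rw [hu γ δ, (hπ.restrict φ).map_d₁₂]⟩
  beta_reduce at hu'
  have hπσ : π ∘ (σ ∘ u') = u' := funext fun g => hσ _
  obtain ⟨w, hw⟩ := hs.isCoboundary₂_of_map_eq_zero hC₁ hB (hf.sub (isCocycle₂_d₁₂ (σ ∘ u')))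
    (fun g h => by rw [Pi.sub_apply, Pi.sub_apply, map_sub, hπ.map_d₁₂, hπσ, hu' g h, sub_self])
    ⟨u - (σ ∘ u') ∘ φ, fun γ δ => by
      beta_reduce
      rw [map_sub, Pi.sub_apply, Pi.sub_apply, Pi.sub_apply, Pi.sub_apply, hu γ δ, d₁₂_comp]⟩
  exact ⟨w + σ ∘ u', fun g h => by
    rw [map_add, Pi.add_apply, Pi.add_apply, ← hw g h]
    simp only [Pi.sub_apply, sub_add_cancel]⟩

theorem resSurjective₂ (hs : IsShortExact ρB ρA ρC i π) (hB₂ : ResSurjective₂ φ ρB)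
    (hB₃ : ResInjective₃ φ ρB) (hC : ResSurjective₂ φ ρC) : ResSurjective₂ φ ρA := by
  intro f hf
  have hπ := hs.isIntertwiningMap_right
  obtain ⟨σ, hσ⟩ := hs.exists_section
  obtain ⟨f', hf', u', hu'⟩ := hC (fun γ δ => π (f γ δ)) (hf.map (hπ.restrict φ))
  beta_reduce at hu'
  obtain ⟨f'', hf'', u, hu⟩ := hs.exists_isCocycle₂_of_map_d₂₃_eq_zero hB₂ hB₃
    (hf.sub (isCocycle₂_d₁₂ (σ ∘ u'))) (f' := fun g h => σ (f' g h))
    (fun g h j => by rw [hπ.map_d₂₃]; simp only [hσ]; exact hf' g h j)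
    (fun γ δ => by
      simp only [Pi.sub_apply, map_sub, hσ, (hπ.restrict φ).map_d₁₂]
      rw [show π ∘ (σ ∘ u') = u' from funext fun g => hσ _, ← hu' γ δ]
      abel)
  refine ⟨f'', hf'', u + σ ∘ u', fun γ δ => ?_⟩
  rw [map_add, Pi.add_apply, Pi.add_apply, ← hu γ δ]
  simp only [Pi.sub_apply]
  abel

theorem resBijective₁₂ (hs : IsShortExact ρB ρA ρC i π) (hB : ResBijective₁₂ φ ρB)
    (hB₃ : ResInjective₃ φ ρB) (hC : ResBijective₁₂ φ ρC) (hC₀ : ResSurjective₀ φ ρC) :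
    ResBijective₁₂ φ ρA where
  injective₁ := hs.resInjective₁ hC₀ hB.injective₁ hC.injective₁
  surjective₁ := hs.resSurjective₁ hB.surjective₁ hB.injective₂ hC.surjective₁
  injective₂ := hs.resInjective₂ hB.injective₂ hC.surjective₁ hC.injective₂
  surjective₂ := hs.resSurjective₂ hB.surjective₂ hB₃ hC.surjective₂

end IsShortExact

end ShortExact

section InvariantLine

variable {k G M : Type*} [Field k] [Monoid G] [AddCommGroup M] [Module k M]
  {ρ : Representation k G M} {a : M}

lemma span_singleton_le_comap (ha : ∀ g, ρ g a = a) (g : G) : k ∙ a ≤ (k ∙ a).comap (ρ g) :=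
  (Submodule.span_singleton_le_iff_mem _ _).2 <| by
    rw [Submodule.mem_comap, ha]
    exact Submodule.mem_span_singleton_self a

lemma isShortExact_span_singleton (ha₀ : a ≠ 0) (ha : ∀ g, ρ g a = a) :
    IsShortExact (trivial k G k) ρ (ρ.quotient _ (span_singleton_le_comap ha))
      (LinearMap.toSpanSingleton k M a) (k ∙ a).mkQ where
  isIntertwiningMap_left := ⟨fun g x => by simp [ha]⟩
  isIntertwiningMap_right := ⟨fun g x => rfl⟩
  injective := smul_left_injective k ha₀
  surjective := Submodule.mkQ_surjective _
  exact := LinearMap.exact_iff.2 <| by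
    rw [Submodule.ker_mkQ, LinearMap.span_singleton_eq_range]

end InvariantLine

section PGroup

variable {p : ℕ} [Fact p.Prime] {G Γ A : Type*} [Group G] [Monoid Γ]
  [AddCommGroup A] [Module (ZMod p) A] [Finite A]

lemma exists_ne_zero_forall_apply_eq [Nontrivial A] (ρ : Representation (ZMod p) G A)
    (hρ : ∀ g, ∃ n, ρ (g ^ p ^ n) = 1) : ∃ a ≠ 0, ∀ g, ρ g a = a := by
  have hP : IsPGroup p ρ.asGroupHom.range := by
    rintro ⟨_, g, rfl⟩
    obtain ⟨n, hn⟩ := hρ g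
    exact ⟨n, Subtype.ext (Units.ext (by simp [← map_pow, asGroupHom_apply, hn]))⟩
  have hdvd : p ∣ Nat.card A := by
    have := (ZModModule.isPGroup_multiplicative (n := p) (G := A)).card_eq_or_dvd
    rw [Nat.card_congr Multiplicative.toAdd] at this
    exact this.resolve_left Finite.one_lt_card.ne'
  obtain ⟨a, ha, h0a⟩ := hP.exists_fixed_point_of_prime_dvd_card_of_fixed_point A hdvd
    (a := 0) fun x => by simp
  exact ⟨a, h0a.symm, fun g => ha ⟨ρ.asGroupHom g, g, rfl⟩⟩

theorem resBijective₁₂_of_pow_eq_one {φ : Γ →* G}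
    (hτ : ResBijective₁₂ φ (trivial (ZMod p) G (ZMod p)))
    (hτ₃ : ResInjective₃ φ (trivial (ZMod p) G (ZMod p))) (ρ : Representation (ZMod p) G A)
    (hρ : ∀ g, ∃ n, ρ (g ^ p ^ n) = 1) (hφ : ∀ g, ∃ γ, ρ g = ρ (φ γ)) :
    ResBijective₁₂ φ ρ := by
  induction hn : Nat.card A using Nat.strong_induction_on generalizing A with
  | _ n ih =>
  rcases subsingleton_or_nontrivial A with hA | hA
  · exact .of_subsingleton φ ρ
  obtain ⟨a, ha₀, ha⟩ := exists_ne_zero_forall_apply_eq ρ hρ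
  have : Finite (A ⧸ ZMod p ∙ a) := Finite.of_surjective _ (Submodule.mkQ_surjective _)
  set ρ' := ρ.quotient _ (span_singleton_le_comap ha)
  have hφ' : ∀ g, ∃ γ, ρ' g = ρ' (φ γ) := fun g =>
    (hφ g).imp fun γ hγ => by ext x; simp [ρ', hγ]
  refine (isShortExact_span_singleton ha₀ ha).resBijective₁₂ hτ hτ₃
    (ih _ ?_ ρ' (fun g => (hρ g).imp fun n hn => by ext x; simp [ρ', hn]) hφ' rfl)
    (resSurjective₀_of_forall_exists_eq φ ρ' hφ')
  have := Submodule.nontrivial_span_singleton (R := ZMod p) ha₀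
  rw [← hn, Submodule.card_eq_card_quotient_mul_card (ZMod p ∙ a)]
  exact lt_mul_of_one_lt_left Nat.card_pos Finite.one_lt_card

end PGroup

end Representation

open Representation

lemma exists_pow_smul_eq_of_isPGroup {p : ℕ} {G A : Type*} [Group G] [AddCommGroup A]
    [DistribMulAction G A] (h : IsPGroup p (DistribMulAction.toAddAut G A).range) (g : G) :
    ∃ n, ∀ a : A, g ^ p ^ n • a = a := by
  obtain ⟨n, hn⟩ := h ⟨_, g, rfl⟩
  have h1 : DistribMulAction.toAddAut G A (g ^ p ^ n) = 1 := by
    rw [map_pow]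
    exact congrArg Subtype.val hn
  exact ⟨n, DFunLike.congr_fun (congrArg Multiplicative.toAdd h1)⟩

theorem stmt18_general {p : ℕ} [Fact p.Prime] {Γd G A : Type*} [Group Γd] [Group G]
    (φ : Γd →* G)
    [AddCommGroup A] [Module (ZMod p) A] [Finite A] [DistribMulAction G A]
    (hpgrp : IsPGroup p (DistribMulAction.toAddAut G A).range)
    (hdense : ∀ g : G, ∃ γ : Γd, ∀ a : A, g • a = φ γ • a)
    -- (a) comparison is an isomorphism on H¹ with trivial coefficients 𝔽_p:
    (h1inj : ∀ c c' : G → ZMod p, (∀ g h, c (g * h) = c g + c h) →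
      (∀ g h, c' (g * h) = c' g + c' h) → (∀ γ : Γd, c (φ γ) = c' (φ γ)) → c = c')
    (h1surj : ∀ cd : Γd → ZMod p, (∀ γ δ, cd (γ * δ) = cd γ + cd δ) →
      ∃ c : G → ZMod p, (∀ g h, c (g * h) = c g + c h) ∧ ∀ γ : Γd, cd γ = c (φ γ))
    -- (a) comparison is an isomorphism on H² with trivial coefficients 𝔽_p:
    (h2inj : ∀ f : G → G → ZMod p,
      (∀ g h j, f h j - f (g * h) j + f g (h * j) - f g h = 0) →
      (∃ u : Γd → ZMod p, ∀ γ δ, f (φ γ) (φ δ) = u δ - u (γ * δ) + u γ) →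
      ∃ u : G → ZMod p, ∀ g h, f g h = u h - u (g * h) + u g)
    (h2surj : ∀ fd : Γd → Γd → ZMod p,
      (∀ γ δ ε, fd δ ε - fd (γ * δ) ε + fd γ (δ * ε) - fd γ δ = 0) →
      ∃ f : G → G → ZMod p,
        (∀ g h j, f h j - f (g * h) j + f g (h * j) - f g h = 0) ∧
        ∃ u : Γd → ZMod p, ∀ γ δ, fd γ δ - f (φ γ) (φ δ) = u δ - u (γ * δ) + u γ)
    -- (b) H³(−, 𝔽_p) = 0 on both sides:
    (h3G : ∀ F : G → G → G → ZMod p,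
      (∀ g h j l, F h j l - F (g * h) j l + F g (h * j) l - F g h (j * l) + F g h j = 0) →
      ∃ f : G → G → ZMod p, ∀ g h j,
        F g h j = f h j - f (g * h) j + f g (h * j) - f g h) :
    -- H¹(G, A) → H¹(Γᵈ, A) is an isomorphism:
    ((∀ c c' : G → A, (∀ g h, c (g * h) = c g + g • c h) →
        (∀ g h, c' (g * h) = c' g + g • c' h) →
        (∃ a : A, ∀ γ : Γd, c (φ γ) - c' (φ γ) = φ γ • a - a) →
        ∃ a : A, ∀ g : G, c g - c' g = g • a - a) ∧
      (∀ cd : Γd → A, (∀ γ δ, cd (γ * δ) = cd γ + φ γ • cd δ) →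
        ∃ c : G → A, (∀ g h, c (g * h) = c g + g • c h) ∧
          ∃ a : A, ∀ γ : Γd, cd γ - c (φ γ) = φ γ • a - a)) ∧
    -- H²(G, A) → H²(Γᵈ, A) is an isomorphism:
    ((∀ f : G → G → A,
        (∀ g h j, g • f h j - f (g * h) j + f g (h * j) - f g h = 0) →
        (∃ u : Γd → A, ∀ γ δ, f (φ γ) (φ δ) = φ γ • u δ - u (γ * δ) + u γ) →
        ∃ u : G → A, ∀ g h, f g h = g • u h - u (g * h) + u g) ∧
      (∀ fd : Γd → Γd → A,
        (∀ γ δ ε, φ γ • fd δ ε - fd (γ * δ) ε + fd γ (δ * ε) - fd γ δ = 0) →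
        ∃ f : G → G → A,
          (∀ g h j, g • f h j - f (g * h) j + f g (h * j) - f g h = 0) ∧
          ∃ u : Γd → A, ∀ γ δ,
            fd γ δ - f (φ γ) (φ δ) = φ γ • u δ - u (γ * δ) + u γ)) := by
  have : SMulCommClass G (ZMod p) A :=
    ⟨fun g c a => ZMod.map_smul (DistribSMul.toAddMonoidHom A g) c a⟩
  have hτ : ResBijective₁₂ φ (trivial (ZMod p) G (ZMod p)) :=
    ⟨resInjective₁_trivial φ h1inj, resSurjective₁_trivial φ h1surj, h2inj, h2surj⟩
  obtain ⟨h1i, h1s, h2i, h2s⟩ := resBijective₁₂_of_pow_eq_one hτ (fun F hF _ => h3G F hF)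
    (ofDistribMulAction (ZMod p) G A)
    (fun g => (exists_pow_smul_eq_of_isPGroup hpgrp g).imp fun _ hn => LinearMap.ext hn)
    (fun g => (hdense g).imp fun _ hγ => LinearMap.ext hγ)
  exact ⟨⟨fun c c' hc hc' hcc' => h1i (c - c') (IsCocycle₁.sub hc hc') hcc', h1s⟩, h2i, h2s⟩

/-- Comparison of group cohomology along a homomorphism `φ : Γᵈ → G` (the discrete
Demuškin group mapping to the profinite Galois group), via the five lemma.  Suppose the
comparison maps are isomorphisms on `H¹(−, 𝔽_p)` and `H²(−, 𝔽_p)` (trivial coefficients)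
and `H³(−, 𝔽_p) = 0` on both sides.  Then for every finite `𝔽_p`-module `A` whose action
(of `G`, factoring through `φ` up to density) has `p`-group image, the comparison maps
`H¹(G, A) → H¹(Γᵈ, A)` and `H²(G, A) → H²(Γᵈ, A)` are isomorphisms.  All cohomology is
expressed at the level of inhomogeneous cocycles and coboundaries. -/
theorem stmt18 {p : ℕ} [Fact p.Prime] {Γd G A : Type*} [Group Γd] [Group G]
    (φ : Γd →* G)
    [AddCommGroup A] [Module (ZMod p) A] [Finite A] [DistribMulAction G A]
    (hpgrp : IsPGroup p (DistribMulAction.toAddAut G A).range)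
    (hdense : ∀ g : G, ∃ γ : Γd, ∀ a : A, g • a = φ γ • a)
    -- (a) comparison is an isomorphism on H¹ with trivial coefficients 𝔽_p:
    (h1inj : ∀ c c' : G → ZMod p, (∀ g h, c (g * h) = c g + c h) →
      (∀ g h, c' (g * h) = c' g + c' h) → (∀ γ : Γd, c (φ γ) = c' (φ γ)) → c = c')
    (h1surj : ∀ cd : Γd → ZMod p, (∀ γ δ, cd (γ * δ) = cd γ + cd δ) →
      ∃ c : G → ZMod p, (∀ g h, c (g * h) = c g + c h) ∧ ∀ γ : Γd, cd γ = c (φ γ))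
    -- (a) comparison is an isomorphism on H² with trivial coefficients 𝔽_p:
    (h2inj : ∀ f : G → G → ZMod p,
      (∀ g h j, f h j - f (g * h) j + f g (h * j) - f g h = 0) →
      (∃ u : Γd → ZMod p, ∀ γ δ, f (φ γ) (φ δ) = u δ - u (γ * δ) + u γ) →
      ∃ u : G → ZMod p, ∀ g h, f g h = u h - u (g * h) + u g)
    (h2surj : ∀ fd : Γd → Γd → ZMod p,
      (∀ γ δ ε, fd δ ε - fd (γ * δ) ε + fd γ (δ * ε) - fd γ δ = 0) →
      ∃ f : G → G → ZMod p,
        (∀ g h j, f h j - f (g * h) j + f g (h * j) - f g h = 0) ∧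
        ∃ u : Γd → ZMod p, ∀ γ δ, fd γ δ - f (φ γ) (φ δ) = u δ - u (γ * δ) + u γ)
    -- (b) H³(−, 𝔽_p) = 0 on both sides:
    (h3G : ∀ F : G → G → G → ZMod p,
      (∀ g h j l, F h j l - F (g * h) j l + F g (h * j) l - F g h (j * l) + F g h j = 0) →
      ∃ f : G → G → ZMod p, ∀ g h j,
        F g h j = f h j - f (g * h) j + f g (h * j) - f g h)
    (h3Γ : ∀ F : Γd → Γd → Γd → ZMod p,
      (∀ γ δ ε η, F δ ε η - F (γ * δ) ε η + F γ (δ * ε) η - F γ δ (ε * η) + F γ δ ε = 0) →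
      ∃ f : Γd → Γd → ZMod p, ∀ γ δ ε,
        F γ δ ε = f δ ε - f (γ * δ) ε + f γ (δ * ε) - f γ δ) :
    -- H¹(G, A) → H¹(Γᵈ, A) is an isomorphism:
    ((∀ c c' : G → A, (∀ g h, c (g * h) = c g + g • c h) →
        (∀ g h, c' (g * h) = c' g + g • c' h) →
        (∃ a : A, ∀ γ : Γd, c (φ γ) - c' (φ γ) = φ γ • a - a) →
        ∃ a : A, ∀ g : G, c g - c' g = g • a - a) ∧
      (∀ cd : Γd → A, (∀ γ δ, cd (γ * δ) = cd γ + φ γ • cd δ) →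
        ∃ c : G → A, (∀ g h, c (g * h) = c g + g • c h) ∧
          ∃ a : A, ∀ γ : Γd, cd γ - c (φ γ) = φ γ • a - a)) ∧
    -- H²(G, A) → H²(Γᵈ, A) is an isomorphism:
    ((∀ f : G → G → A,
        (∀ g h j, g • f h j - f (g * h) j + f g (h * j) - f g h = 0) →
        (∃ u : Γd → A, ∀ γ δ, f (φ γ) (φ δ) = φ γ • u δ - u (γ * δ) + u γ) →
        ∃ u : G → A, ∀ g h, f g h = g • u h - u (g * h) + u g) ∧
      (∀ fd : Γd → Γd → A,
        (∀ γ δ ε, φ γ • fd δ ε - fd (γ * δ) ε + fd γ (δ * ε) - fd γ δ = 0) →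
        ∃ f : G → G → A,
          (∀ g h j, g • f h j - f (g * h) j + f g (h * j) - f g h = 0) ∧
          ∃ u : Γd → A, ∀ γ δ,
            fd γ δ - f (φ γ) (φ δ) = φ γ • u δ - u (γ * δ) + u γ)) :=
  stmt18_general φ hpgrp hdense h1inj h1surj h2inj h2surj h3G
end
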